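/- arXiv:2311.18226 — 11 statements merged into one kernel-verified Lean document; each statement's English description precedes it below -/
import Mathlib

section
/- Let X be a nonempty finite set, let π be a target density on X, let d be a detection function on X such that d(x,0)=0 and d(x,·) is continuous, concave, and nondecreasing on [0,∞) for each x ∈ X, and let E be a cumulative effort function. Then there exists a uniformly optimal search plan for π within Φ(E); that is, there exists a search plan φ* with ∑_{x∈X} φ*(x,t) = E(t) for all t ≥ 0 such that for every search plan φ with ∑_{x∈X} φ(x,t) = E(t) for all t ≥ 0 and every t ≥ 0 one has ∑_{x∈X} d(x, φ*(x,t)) π(x) ≥ ∑_{x∈X} d(x, φ(x,t)) π(x). -/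
/-!
For a budget `e`, the allocations maximizing `P f = ∑ x, d x (f x) * π x` form a nonempty
compact convex set, and strict convexity of `f ↦ ∑ x, f x ^ 2` singles out one of least norm.
These choices increase with `e`. Given such optima `f` at `e` and `f'` at `e' ≥ e`, move
each coordinate of `f` towards the corresponding coordinate of `f'`: fully where `f x > f' x`,
and by a common fraction of the gap elsewhere, chosen so that the budget stays `e`. The
result `g`, together with `f + f' - g` at budget `e'`, keeps every pair of coordinates inside
`[min (f x) (f' x), max (f x) (f' x)]`, so concavity gives `P g + P (f + f' - g) ≥ P f + P f'`
while the sum of squares does not increase. Thus `g` is again a least-norm optimum, so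
`g = f`, which rules out `f x > f' x`. The plan is the least-norm optimum of budget `E t`.
-/

open Finset Set

section Segment

variable {𝕜 E β : Type*} [CommRing 𝕜] [PartialOrder 𝕜] [AddCommGroup E] [Module 𝕜 E]
  [AddCommMonoid β] [PartialOrder β] [IsOrderedAddMonoid β] [Module 𝕜 β] {s : Set E} {f : E → β}
  {x y z : E}

theorem ConcaveOn.map_add_map_le_map_add_map_sub (hf : ConcaveOn 𝕜 s f) (hx : x ∈ s)
    (hy : y ∈ s) (hz : z ∈ segment 𝕜 x y) : f x + f y ≤ f z + f (x + y - z) := by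
  obtain ⟨a, b, ha, hb, hab, rfl⟩ := hz
  have hw : x + y - (a • x + b • y) = b • x + a • y := by
    obtain rfl := eq_sub_of_add_eq hab; module
  calc f x + f y = (a + b) • f x + (b + a) • f y := by
        rw [hab, add_comm b, hab, one_smul, one_smul]
    _ = (a • f x + b • f y) + (b • f x + a • f y) := by simp only [add_smul]; abel
    _ ≤ f (a • x + b • y) + f (x + y - (a • x + b • y)) := by
      rw [hw]
      exact add_le_add (hf.2 hx hy ha hb hab) (hf.2 hx hy hb ha (by rwa [add_comm]))

theorem ConvexOn.map_add_map_sub_le_map_add_map (hf : ConvexOn 𝕜 s f) (hx : x ∈ s)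
    (hy : y ∈ s) (hz : z ∈ segment 𝕜 x y) : f z + f (x + y - z) ≤ f x + f y :=
  ConcaveOn.map_add_map_le_map_add_map_sub (β := βᵒᵈ) hf hx hy hz

end Segment

theorem ConcaveOn.convex_sep_isMaxOn {𝕜 E β : Type*} [Semiring 𝕜] [PartialOrder 𝕜]
    [AddCommMonoid E] [Module 𝕜 E] [AddCommMonoid β] [PartialOrder β] [IsOrderedAddMonoid β]
    [Module 𝕜 β] [PosSMulMono 𝕜 β] {s : Set E} {f : E → β} (hf : ConcaveOn 𝕜 s f) :
    Convex 𝕜 {x ∈ s | IsMaxOn f s x} := by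
  intro x hx y hy a b ha hb hab
  refine ⟨hf.1 hx.1 hy.1 ha hb hab, fun z hz => ?_⟩
  calc f z = a • f z + b • f z := (Convex.combo_self hab _).symm
    _ ≤ a • f x + b • f y := by gcongr; exacts [hx.2 hz, hy.2 hz]
    _ ≤ f (a • x + b • y) := hf.2 hx.1 hy.1 ha hb hab

theorem strictConvexOn_sum_sq {X : Type*} [Fintype X] :
    StrictConvexOn ℝ univ fun f : X → ℝ => ∑ x, f x ^ 2 := by
  have hsq := Even.strictConvexOn_pow even_two two_ne_zero
  refine ⟨convex_univ, fun _ _ _ _ hfg a b ha hb hab => ?_⟩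
  obtain ⟨x, hx⟩ := Function.ne_iff.1 hfg
  simp only [smul_eq_mul, mul_sum, ← sum_add_distrib]
  exact sum_lt_sum (fun y _ => hsq.convexOn.2 trivial trivial ha.le hb.le hab)
    ⟨x, mem_univ x, hsq.2 trivial trivial hx ha hb hab⟩

namespace Search

variable {X : Type*} [Fintype X]

def allocations (e : ℝ) : Set (X → ℝ) := {f | 0 ≤ f ∧ ∑ x, f x = e}

theorem allocations_nonempty [Nonempty X] {e : ℝ} (he : 0 ≤ e) :
    (allocations e : Set (X → ℝ)).Nonempty :=
  ⟨fun _ => e / Fintype.card X, fun _ => by positivity, by simp [card_univ, mul_div_cancel₀]⟩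

theorem allocations_subset_Icc (e : ℝ) : allocations e ⊆ Icc (0 : X → ℝ) (fun _ => e) :=
  fun _ hf => ⟨hf.1, fun x => hf.2 ▸ single_le_sum (fun y _ => hf.1 y) (mem_univ x)⟩

theorem isCompact_allocations (e : ℝ) : IsCompact (allocations e : Set (X → ℝ)) :=
  isCompact_Icc.of_isClosed_subset
    (isClosed_Ici.inter (isClosed_eq (continuous_finsetSum _ fun x _ => continuous_apply x)
      continuous_const))
    (allocations_subset_Icc e)

theorem convex_allocations (e : ℝ) : Convex ℝ (allocations e : Set (X → ℝ)) := by
  intro f hf g hg a b ha hb hab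
  refine ⟨add_nonneg (smul_nonneg ha hf.1) (smul_nonneg hb hg.1), ?_⟩
  simp only [Pi.add_apply, Pi.smul_apply, smul_eq_mul, sum_add_distrib, ← mul_sum, hf.2, hg.2]
  rw [← add_mul, hab, one_mul]

variable (D : X → ℝ → ℝ)

def optimalAllocations (e : ℝ) : Set (X → ℝ) :=
  {f ∈ allocations e | IsMaxOn (fun g => ∑ x, D x (g x)) (allocations e) f}

variable {D}

theorem continuousOn_sum_comp_allocations (hDc : ∀ x, ContinuousOn (D x) (Ici 0)) (e : ℝ) :
    ContinuousOn (fun f : X → ℝ => ∑ x, D x (f x)) (allocations e) :=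
  continuousOn_finsetSum _ fun x _ =>
    (hDc x).comp (continuous_apply x).continuousOn fun _ hf => hf.1 x

theorem concaveOn_sum_comp_allocations (hD : ∀ x, ConcaveOn ℝ (Ici 0) (D x)) (e : ℝ) :
    ConcaveOn ℝ (allocations e) fun f : X → ℝ => ∑ x, D x (f x) := by
  refine ⟨convex_allocations e, fun f hf g hg a b ha hb hab => ?_⟩
  simp only [smul_eq_mul, mul_sum, ← sum_add_distrib]
  exact sum_le_sum fun x _ => (hD x).2 (hf.1 x) (hg.1 x) ha hb hab

theorem exists_isMinOn_sum_sq_optimalAllocations [Nonempty X]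
    (hDc : ∀ x, ContinuousOn (D x) (Ici 0)) {e : ℝ} (he : 0 ≤ e) :
    ∃ f ∈ optimalAllocations D e,
      IsMinOn (fun f => ∑ x, f x ^ 2) (optimalAllocations D e) f := by
  have hP := continuousOn_sum_comp_allocations hDc e
  obtain ⟨f₀, hf₀⟩ : (optimalAllocations D e).Nonempty :=
    (isCompact_allocations e).exists_isMaxOn (allocations_nonempty he) hP
  have hopt : optimalAllocations D e =
      allocations e ∩ (fun f => ∑ x, D x (f x)) ⁻¹' Ici (∑ x, D x (f₀ x)) := by
    ext g
    exact ⟨fun hg => ⟨hg.1, hg.2 hf₀.1⟩,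
      fun hg => ⟨hg.1, isMaxOn_iff.2 fun h hh => (hf₀.2 hh).trans hg.2⟩⟩
  have hcompact : IsCompact (optimalAllocations D e) := by
    rw [hopt]
    exact (isCompact_allocations e).of_isClosed_subset
      (hP.preimage_isClosed_of_isClosed (isCompact_allocations e).isClosed isClosed_Ici)
      inter_subset_left
  exact hcompact.exists_isMinOn ⟨f₀, hf₀⟩
    (continuous_finsetSum _ fun x _ => (continuous_apply x).pow 2).continuousOn

theorem eq_of_isMinOn_sum_sq_optimalAllocations (hD : ∀ x, ConcaveOn ℝ (Ici 0) (D x)) {e : ℝ}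
    {f g : X → ℝ} (hf : f ∈ optimalAllocations D e) (hg : g ∈ optimalAllocations D e)
    (hfmin : IsMinOn (fun f => ∑ x, f x ^ 2) (optimalAllocations D e) f)
    (hgmin : IsMinOn (fun f => ∑ x, f x ^ 2) (optimalAllocations D e) g) : f = g :=
  (strictConvexOn_sum_sq.subset (subset_univ _)
    (concaveOn_sum_comp_allocations hD e).convex_sep_isMaxOn).eq_of_isMinOn hfmin hgmin hf hg

theorem exists_exchange {e e' : ℝ} (hee : e ≤ e') {f f' : X → ℝ} (hf : f ∈ allocations e)
    (hf' : f' ∈ allocations e') :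
    ∃ g ∈ allocations e, f + f' - g ∈ allocations e' ∧ (∀ x, g x ∈ uIcc (f x) (f' x)) ∧
      ∀ x, f' x ≤ f x → g x = f' x := by
  set m := ∑ x, min (f x) (f' x)
  have hm : m ≤ e := hf.2 ▸ sum_le_sum fun x _ => min_le_left _ _
  set θ := (e - m) / (e' - m)
  have hθ₀ : 0 ≤ θ := div_nonneg (by linarith) (by linarith)
  have hθ₁ : θ ≤ 1 := div_le_one_of_le₀ (by linarith) (by linarith)
  have hθm : θ * (e' - m) = e - m := div_mul_cancel_of_imp fun h => by linarith
  set g : X → ℝ := fun x => min (f x) (f' x) + θ * (f' x - min (f x) (f' x))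
  have hg_between : ∀ x, g x ∈ uIcc (f x) (f' x) := by
    intro x
    rcases le_total (f x) (f' x) with h | h
    · simp only [g, min_eq_left h, uIcc_of_le h, Set.mem_Icc]
      constructor <;> nlinarith
    · simp [g, h]
  have hg_sum : ∑ x, g x = e := by
    simp only [g, sum_add_distrib, ← mul_sum, sum_sub_distrib, hf'.2]
    linarith
  refine ⟨g, ⟨fun x => le_trans (le_min (hf.1 x) (hf'.1 x)) (hg_between x).1, hg_sum⟩,
    ⟨fun x => ?_, ?_⟩, hg_between, fun x h => by simp [g, min_eq_right h]⟩
  · have := min_add_max (f x) (f' x)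
    have := (hg_between x).2
    have : 0 ≤ min (f x) (f' x) := le_min (hf.1 x) (hf'.1 x)
    simp only [Pi.zero_apply, Pi.sub_apply, Pi.add_apply]
    linarith
  · simp only [Pi.sub_apply, Pi.add_apply, sum_sub_distrib, sum_add_distrib, hf.2, hf'.2, hg_sum]
    ring

theorem le_of_isMinOn_sum_sq_optimalAllocations (hD : ∀ x, ConcaveOn ℝ (Ici 0) (D x))
    {e e' : ℝ} (hee : e ≤ e') {f f' : X → ℝ}
    (hf : f ∈ optimalAllocations D e)
    (hfmin : IsMinOn (fun f => ∑ x, f x ^ 2) (optimalAllocations D e) f)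
    (hf' : f' ∈ optimalAllocations D e')
    (hf'min : IsMinOn (fun f => ∑ x, f x ^ 2) (optimalAllocations D e') f') : f ≤ f' := by
  obtain ⟨g, hg, hk, hg_between, hg_of_le⟩ := exists_exchange hee hf.1 hf'.1
  have hseg : ∀ x, g x ∈ segment ℝ (f x) (f' x) := fun x =>
    segment_eq_uIcc (f x) (f' x) ▸ hg_between x
  have hdet : ∑ x, D x (f x) + ∑ x, D x (f' x) ≤
      ∑ x, D x (g x) + ∑ x, D x ((f + f' - g) x) := by
    simp only [← sum_add_distrib]
    exact sum_le_sum fun x _ =>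
      (hD x).map_add_map_le_map_add_map_sub (hf.1.1 x) (hf'.1.1 x) (hseg x)
  have hsq : ∑ x, g x ^ 2 + ∑ x, (f + f' - g) x ^ 2 ≤ ∑ x, f x ^ 2 + ∑ x, f' x ^ 2 := by
    simp only [← sum_add_distrib]
    exact sum_le_sum fun x _ => (Even.convexOn_pow even_two).map_add_map_sub_le_map_add_map
      (Set.mem_univ _) (Set.mem_univ _) (hseg x)
  have hg_opt : g ∈ optimalAllocations D e :=
    ⟨hg, isMaxOn_iff.2 fun h hh => by
      linarith [isMaxOn_iff.1 hf.2 h hh, isMaxOn_iff.1 hf'.2 _ hk]⟩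
  have hk_opt : f + f' - g ∈ optimalAllocations D e' :=
    ⟨hk, isMaxOn_iff.2 fun h hh => by
      linarith [isMaxOn_iff.1 hf.2 _ hg, isMaxOn_iff.1 hf'.2 h hh]⟩
  have hg_min : IsMinOn (fun f => ∑ x, f x ^ 2) (optimalAllocations D e) g :=
    isMinOn_iff.2 fun h hh => by
      linarith [isMinOn_iff.1 hfmin h hh, isMinOn_iff.1 hf'min _ hk_opt]
  have hfg := eq_of_isMinOn_sum_sq_optimalAllocations hD hf hg_opt hfmin hg_min
  exact fun x => not_lt.1 fun hlt => hlt.ne' ((congrFun hfg x).trans (hg_of_le x hlt.le))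

theorem exists_monotoneOn_optimalAllocations [Nonempty X]
    (hDc : ∀ x, ContinuousOn (D x) (Ici 0)) (hD : ∀ x, ConcaveOn ℝ (Ici 0) (D x)) :
    ∃ sel : ℝ → X → ℝ,
      (∀ e, 0 ≤ e → sel e ∈ optimalAllocations D e) ∧ MonotoneOn sel (Ici 0) := by
  choose sel hsel hmin using fun e (he : 0 ≤ e) =>
    exists_isMinOn_sum_sq_optimalAllocations hDc he
  refine ⟨fun e => if he : 0 ≤ e then sel e he else 0,
    fun e he => by simpa [he] using hsel e he, fun e he e' he' hee => ?_⟩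
  simp only [dif_pos (mem_Ici.1 he), dif_pos (mem_Ici.1 he')]
  exact le_of_isMinOn_sum_sq_optimalAllocations hD hee (hsel e he) (hmin e he) (hsel e' he')
    (hmin e' he')

end Search

theorem uniformly_optimal_exists_discrete_general
    {X : Type*} [Fintype X] [Nonempty X]
    (π : X → ℝ) (hπpos : ∀ x, 0 < π x)
    (d : X → ℝ → ℝ)
    (hdcont : ∀ x, ContinuousOn (d x) (Set.Ici 0))
    (hdconc : ∀ x, ConcaveOn ℝ (Set.Ici 0) (d x))
    (E : ℝ → ℝ) (hE0 : ∀ t, 0 ≤ t → 0 ≤ E t)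
    (hEmono : MonotoneOn E (Set.Ici 0)) :
    ∃ φstar : X → ℝ → ℝ,
      (∀ x t, 0 ≤ t → 0 ≤ φstar x t) ∧
      (∀ x, MonotoneOn (φstar x) (Set.Ici 0)) ∧
      (∀ t, 0 ≤ t → ∑ x, φstar x t = E t) ∧
      ∀ φ : X → ℝ → ℝ,
        (∀ x t, 0 ≤ t → 0 ≤ φ x t) →
        (∀ x, MonotoneOn (φ x) (Set.Ici 0)) →
        (∀ t, 0 ≤ t → ∑ x, φ x t = E t) →
        ∀ t, 0 ≤ t →
          ∑ x, d x (φ x t) * π x ≤ ∑ x, d x (φstar x t) * π x := by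
  obtain ⟨sel, hsel, hsel_mono⟩ := Search.exists_monotoneOn_optimalAllocations
    (D := fun x y => d x y * π x) (fun x => (hdcont x).mul continuousOn_const)
    (fun x => by simpa only [smul_eq_mul, mul_comm] using (hdconc x).smul (hπpos x).le)
  have hopt : ∀ t, 0 ≤ t → sel (E t) ∈ Search.optimalAllocations _ (E t) :=
    fun t ht => hsel _ (hE0 t ht)
  refine ⟨fun x t => sel (E t) x, fun x t ht => (hopt t ht).1.1 x,
    fun x t ht t' ht' htt' => hsel_mono (hE0 t ht) (hE0 t' ht') (hEmono ht ht' htt') x,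
    fun t ht => (hopt t ht).1.2, fun φ hφ _ hφsum t ht => ?_⟩
  exact isMaxOn_iff.1 (hopt t ht).2 _ ⟨fun x => hφ x t ht, hφsum t ht⟩

/-- Existence of a uniformly optimal search plan in the discrete case
(Theorem 1(i) of the paper): if `X` is a nonempty finite set, `π` a target density on `X`,
`d` a detection function with `d x 0 = 0` and `d x ·` continuous, concave, nondecreasing
on `[0, ∞)`, and `E` a cumulative effort function, then there is a search plan `φ*` in
`Φ(E)` maximizing the subjective detection probability at every time. -/
theorem uniformly_optimal_exists_discrete
    {X : Type*} [Fintype X] [Nonempty X]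
    (π : X → ℝ) (hπpos : ∀ x, 0 < π x) (hπsum : ∑ x, π x = 1)
    (d : X → ℝ → ℝ)
    (hdrange : ∀ x, ∀ y ∈ Set.Ici (0:ℝ), d x y ∈ Set.Icc (0:ℝ) 1)
    (hd0 : ∀ x, d x 0 = 0)
    (hdcont : ∀ x, ContinuousOn (d x) (Set.Ici 0))
    (hdconc : ∀ x, ConcaveOn ℝ (Set.Ici 0) (d x))
    (hdmono : ∀ x, MonotoneOn (d x) (Set.Ici 0))
    (E : ℝ → ℝ) (hE0 : ∀ t, 0 ≤ t → 0 ≤ E t)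
    (hEmono : MonotoneOn E (Set.Ici 0))
    (hEpos : ∀ t, 0 < t → 0 < E t) :
    ∃ φstar : X → ℝ → ℝ,
      (∀ x t, 0 ≤ t → 0 ≤ φstar x t) ∧
      (∀ x, MonotoneOn (φstar x) (Set.Ici 0)) ∧
      (∀ t, 0 ≤ t → ∑ x, φstar x t = E t) ∧
      ∀ φ : X → ℝ → ℝ,
        (∀ x t, 0 ≤ t → 0 ≤ φ x t) →
        (∀ x, MonotoneOn (φ x) (Set.Ici 0)) →
        (∀ t, 0 ≤ t → ∑ x, φ x t = E t) →
        ∀ t, 0 ≤ t →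
          ∑ x, d x (φ x t) * π x ≤ ∑ x, d x (φstar x t) * π x :=
  uniformly_optimal_exists_discrete_general π hπpos d hdcont hdconc E hE0 hEmono
end

section
/- Let X ⊆ ℝⁿ be a measurable set, let π be a probability density function supported on X, let d : X × [0,∞) → [0,1] be jointly measurable with d(x,0) = 0 and d(x,·) nondecreasing and right-continuous for each x ∈ X, and let E be a cumulative effort function. Then there exists a uniformly optimal search plan for π within Φ(E); that is, there exists a search plan φ* with ∫_X φ*(x,t) dx = E(t) for all t ≥ 0 such that for every search plan φ with ∫_X φ(x,t) dx = E(t) for all t ≥ 0 and every t ≥ 0 one has ∫_X d(x, φ*(x,t)) π(x) dx ≥ ∫_X d(x, φ(x,t)) π(x) dx. -/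
/-!
Lagrangian relaxation. For a price `c > 0` of effort, maximize `y ↦ π x * d x y - c * y` over
`y ≥ 0` at each point. Since `d x` is monotone and right-continuous, this function is upper
semicontinuous, so its maximizers form a nonempty compact set; its largest and smallest elements
`yMax`, `yMin` are measurable in `x` and antitone in `c`, with `yMax c' → yMin c` as `c' ↓ c`
and `yMin c' → yMax c` as `c' ↑ c`. An allocation made of maximizers beats every
allocation with the same total effort. For effort `s` the critical price `c(s)` satisfies
`∫ yMin ≤ s ≤ ∫ yMax`, and sweeping a hyperplane across the space, switching from `yMin` to
`yMax`, spends exactly `s`. Prices fall and the hyperplane advances as `s` grows, so the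
allocations are nested; composing with `E` gives the plan. If `∫ yMax` stays bounded as
`c → 0`, then beyond that total every point already sits at a maximizer of `d x`, and the
surplus effort is harmless.
-/

open MeasureTheory Set Filter Topology

theorem StieltjesFunction.upperSemicontinuous (D : StieltjesFunction ℝ) :
    UpperSemicontinuous D := by
  intro y b hb
  rw [← nhdsLE_sup_nhdsGE, eventually_sup]
  exact ⟨eventually_nhdsWithin_of_forall fun z hz => (D.mono hz).trans_lt hb,
    D.right_continuous y (Iio_mem_nhds hb)⟩

noncomputable def StieltjesFunction.ofMonotoneOnIci (f : ℝ → ℝ) (hf : MonotoneOn f (Ici 0))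
    (hrc : ∀ y, 0 ≤ y → ContinuousWithinAt f (Ici y) y) : StieltjesFunction ℝ where
  toFun y := f (max y 0)
  mono' a b hab := hf (le_max_right a 0) (le_max_right b 0) (max_le_max_right 0 hab)
  right_continuous' y := ContinuousWithinAt.comp (g := f) (hrc _ (le_max_right y 0))
    (continuous_id.max continuous_const).continuousWithinAt
    fun _ (hz : y ≤ _) => max_le_max_right 0 hz

@[simp]
theorem StieltjesFunction.ofMonotoneOnIci_apply (f : ℝ → ℝ) (hf : MonotoneOn f (Ici 0))
    (hrc : ∀ y, 0 ≤ y → ContinuousWithinAt f (Ici y) y) (y : ℝ) :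
    StieltjesFunction.ofMonotoneOnIci f hf hrc y = f (max y 0) :=
  rfl

theorem MeasureTheory.ae_bddAbove_and_integrable_iSup {α : Type*} [MeasurableSpace α]
    {μ : Measure α} {f : ℕ → α → ℝ} (hf : ∀ n, Measurable (f n))
    (hfi : ∀ n, Integrable (f n) μ) (hf0 : ∀ n x, 0 ≤ f n x)
    (hmono : ∀ x, Monotone fun n => f n x) (hbdd : BddAbove (range fun n => ∫ x, f n x ∂μ)) :
    (∀ᵐ x ∂μ, BddAbove (range fun n => f n x)) ∧ Integrable (fun x => ⨆ n, f n x) μ := by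
  obtain ⟨M, hM⟩ := hbdd
  set F := fun x => ⨆ n, ENNReal.ofReal (f n x)
  have hF : ∫⁻ x, F x ∂μ ≤ ENNReal.ofReal M := by
    rw [lintegral_iSup (fun n => (hf n).ennreal_ofReal)
      fun i j hij x => ENNReal.ofReal_le_ofReal (hmono x hij)]
    refine iSup_le fun n => ?_
    rw [← ofReal_integral_eq_lintegral_ofReal (hfi n) (Eventually.of_forall (hf0 n))]
    exact ENNReal.ofReal_le_ofReal (hM ⟨n, rfl⟩)
  have hFfin : ∫⁻ x, F x ∂μ ≠ ⊤ := ne_top_of_le_ne_top ENNReal.ofReal_ne_top hF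
  have hbd : ∀ᵐ x ∂μ, BddAbove (range fun n => f n x) := by
    filter_upwards [ae_lt_top (Measurable.iSup fun n => (hf n).ennreal_ofReal) hFfin] with x hx
    refine ⟨(F x).toReal, forall_mem_range.2 fun n => ?_⟩
    have := ENNReal.toReal_mono hx.ne (le_iSup (fun n => ENNReal.ofReal (f n x)) n)
    rwa [ENNReal.toReal_ofReal (hf0 n x)] at this
  have hsup0 : 0 ≤ᵐ[μ] fun x => ⨆ n, f n x :=
    Eventually.of_forall fun x => Real.iSup_nonneg fun n => hf0 n x
  refine ⟨hbd, (Measurable.iSup hf).aestronglyMeasurable, ?_⟩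
  rw [hasFiniteIntegral_iff_ofReal hsup0]
  refine lt_of_le_of_lt (le_of_eq (lintegral_congr_ae ?_)) hFfin.lt_top
  filter_upwards [hbd] with x hx
  exact Monotone.map_ciSup_of_continuousAt ENNReal.continuous_ofReal.continuousAt
    ENNReal.ofReal_mono hx

namespace SearchPlan

noncomputable def firstHit (m : ℝ → ℝ) (s : ℝ) : ℝ := sInf {t ∈ Icc (0 : ℝ) 1 | s ≤ m t}

theorem apply_firstHit {m : ℝ → ℝ} (hm : Continuous m) {s : ℝ} (h0 : m 0 ≤ s) (h1 : s ≤ m 1) :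
    m (firstHit m s) = s := by
  set A := {t ∈ Icc (0 : ℝ) 1 | s ≤ m t}
  have hA : firstHit m s ∈ A :=
    (isClosed_Icc.inter (isClosed_le continuous_const hm)).csInf_mem
      ⟨1, ⟨zero_le_one, le_rfl⟩, h1⟩ ⟨0, fun _ ht => ht.1.1⟩
  obtain ⟨t, ht, hts⟩ := intermediate_value_Icc hA.1.1 hm.continuousOn ⟨h0, hA.2⟩
  have : firstHit m s ≤ t := csInf_le ⟨0, fun _ ht => ht.1.1⟩
    ⟨⟨ht.1, ht.2.trans hA.1.2⟩, hts.ge⟩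
  rwa [le_antisymm ht.2 this] at hts

theorem firstHit_mono {m : ℝ → ℝ} {s s' : ℝ} (hss : s ≤ s') (h1 : s' ≤ m 1) :
    firstHit m s ≤ firstHit m s' :=
  csInf_le_csInf ⟨0, fun _ ht => ht.1.1⟩ ⟨1, ⟨zero_le_one, le_rfl⟩, h1⟩
    fun _ ht => ⟨ht.1, hss.trans ht.2⟩

section Sweep

variable {α : Type*} {h f g : α → ℝ}

noncomputable def sweepMix (h f g : α → ℝ) (t : ℝ) (x : α) : ℝ := if h x ≤ t then g x else f x

theorem sweepMix_eq_or_eq (t : ℝ) (x : α) :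
    sweepMix h f g t x = f x ∨ sweepMix h f g t x = g x := by
  unfold sweepMix
  split_ifs <;> simp

theorem sweepMix_mono (hfg : f ≤ g) {t t' : ℝ} (htt : t ≤ t') (x : α) :
    sweepMix h f g t x ≤ sweepMix h f g t' x := by
  unfold sweepMix
  split_ifs with h1 h2
  exacts [le_rfl, absurd (h1.trans htt) h2, hfg x, le_rfl]

theorem sweepMix_one (hh1 : ∀ x, h x ≤ 1) : sweepMix h f g 1 = g := by
  funext x
  simp [sweepMix, hh1 x]

variable [MeasurableSpace α] {μ : Measure α}

theorem measurable_sweepMix (hh : Measurable h) (hf : Measurable f) (hg : Measurable g) (t : ℝ) :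
    Measurable (sweepMix h f g t) :=
  Measurable.ite (measurableSet_le hh measurable_const) hg hf

theorem continuous_integral_sweepMix (hh : Measurable h) (hnull : ∀ t, μ (h ⁻¹' {t}) = 0)
    (hf : Measurable f) (hg : Measurable g) (hfi : Integrable f μ) (hgi : Integrable g μ) :
    Continuous fun t => ∫ x, sweepMix h f g t x ∂μ := by
  refine continuous_iff_continuousAt.2 fun t₀ => ?_
  refine tendsto_integral_filter_of_dominated_convergence (fun x => |f x| + |g x|)
    (Eventually.of_forall fun t => (measurable_sweepMix hh hf hg t).aestronglyMeasurable)
    (Eventually.of_forall fun t => Eventually.of_forall fun x => ?_) (hfi.abs.add hgi.abs) ?_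
  · rcases sweepMix_eq_or_eq (h := h) (f := f) (g := g) t x with hx | hx <;>
      rw [hx, Real.norm_eq_abs]
    · exact le_add_of_nonneg_right (abs_nonneg _)
    · exact le_add_of_nonneg_left (abs_nonneg _)
  · have : ∀ᵐ x ∂μ, h x ≠ t₀ := measure_eq_zero_iff_ae_notMem.1 (hnull t₀)
    filter_upwards [this] with x hx
    refine tendsto_const_nhds.congr' ?_
    rcases hx.lt_or_gt with hlt | hgt
    · filter_upwards [lt_mem_nhds hlt] with t ht
      simp [sweepMix, hlt.le, ht.le]
    · filter_upwards [gt_mem_nhds hgt] with t ht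
      simp [sweepMix, not_le.2 hgt, not_le.2 ht]

theorem integral_sweepMix_zero (hh0 : ∀ x, 0 ≤ h x) (hnull : μ (h ⁻¹' {0}) = 0) :
    ∫ x, sweepMix h f g 0 x ∂μ = ∫ x, f x ∂μ := by
  refine integral_congr_ae ?_
  filter_upwards [measure_eq_zero_iff_ae_notMem.1 hnull] with x hx
  have : ¬ h x ≤ 0 := fun hle => hx (le_antisymm hle (hh0 x))
  simp [sweepMix, this]

end Sweep

section Lagrangian

def argmax (D : StieltjesFunction ℝ) (c : ℝ) : Set ℝ :=
  {y | 0 ≤ y ∧ IsMaxOn (fun z => D z - c * z) (Ici 0) y}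

noncomputable def yMax (D : StieltjesFunction ℝ) (c : ℝ) : ℝ := sSup (argmax D c)

noncomputable def yMin (D : StieltjesFunction ℝ) (c : ℝ) : ℝ := sInf (argmax D c)

variable {D : StieltjesFunction ℝ} {B c : ℝ}

theorem mem_argmax_of_tendsto {ι : Type*} {l : Filter ι} [l.NeBot] {c' y' : ι → ℝ} {y : ℝ}
    (hc : Tendsto c' l (𝓝 c)) (hy : Tendsto y' l (𝓝 y))
    (hmem : ∀ᶠ i in l, y' i ∈ argmax D (c' i)) : y ∈ argmax D c := by
  refine ⟨ge_of_tendsto hy (hmem.mono fun i hi => hi.1), fun z (hz : 0 ≤ z) => ?_⟩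
  change D z - c * z ≤ D y - c * y
  by_contra! hlt
  set ε := (D z - c * z - (D y - c * y)) / 3 with hε_def
  have hε : 0 < ε := by linarith
  have hD : ∀ᶠ i in l, D (y' i) < D y + ε :=
    hy.eventually (D.upperSemicontinuous y _ (lt_add_of_pos_right _ hε))
  have hcy : ∀ᶠ i in l, c * y - ε < c' i * y' i :=
    (hc.mul hy).eventually (lt_mem_nhds (sub_lt_self _ hε))
  have hcz : ∀ᶠ i in l, c' i * z < c * z + ε :=
    (hc.mul_const z).eventually (gt_mem_nhds (lt_add_of_pos_right _ hε))
  obtain ⟨i, hDi, hcyi, hczi, hi⟩ := (hD.and (hcy.and (hcz.and hmem))).exists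
  have : D z - c' i * z ≤ D (y' i) - c' i * y' i := hi.2 hz
  linarith

theorem exists_isMaxOn_Ici (hB : ∀ y, D y ≤ B) (hc : 0 < c) (r : ℝ) :
    ∃ m ∈ Ici r, IsMaxOn (fun z => D z - c * z) (Ici r) m := by
  set g := fun z => D z - c * z
  have hg : UpperSemicontinuous g := by
    simpa [g, sub_eq_add_neg] using D.upperSemicontinuous.add
      (continuous_const.mul continuous_id).neg.upperSemicontinuous
  set K := max r ((B - g r) / c)
  obtain ⟨m, hm, hmax⟩ := (hg.upperSemicontinuousOn _).exists_isMaxOn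
    (nonempty_Icc.2 (le_max_left r _)) isCompact_Icc
  refine ⟨m, hm.1, fun z (hz : r ≤ z) => ?_⟩
  rcases le_or_gt z K with hzK | hzK
  · exact hmax ⟨hz, hzK⟩
  · have hK : (B - g r) / c < z := (le_max_right _ _).trans_lt hzK
    have : g z < g r := by
      rw [div_lt_iff₀ hc] at hK
      simp only [g] at hK ⊢
      linarith [hB z]
    exact this.le.trans (hmax ⟨le_rfl, le_max_left _ _⟩)

theorem argmax_nonempty (hB : ∀ y, D y ≤ B) (hc : 0 < c) : (argmax D c).Nonempty :=
  let ⟨m, hm, hmax⟩ := exists_isMaxOn_Ici hB hc 0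
  ⟨m, hm, hmax⟩

theorem le_div_of_mem_argmax (hB : ∀ y, D y ≤ B) (hc : 0 < c) {y : ℝ} (hy : y ∈ argmax D c) :
    y ≤ (B - D 0) / c := by
  have : D 0 - c * 0 ≤ D y - c * y := hy.2 (le_refl (0:ℝ))
  rw [le_div_iff₀ hc]
  linarith [hB y]

theorem isClosed_argmax : IsClosed (argmax D c) :=
  IsSeqClosed.isClosed fun _ _ hu hlim =>
    mem_argmax_of_tendsto tendsto_const_nhds hlim (Eventually.of_forall hu)

theorem isGreatest_yMax (hB : ∀ y, D y ≤ B) (hc : 0 < c) : IsGreatest (argmax D c) (yMax D c) :=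
  isClosed_argmax.isGreatest_csSup (argmax_nonempty hB hc)
    ⟨_, fun _ hy => le_div_of_mem_argmax hB hc hy⟩

theorem isLeast_yMin (hB : ∀ y, D y ≤ B) (hc : 0 < c) : IsLeast (argmax D c) (yMin D c) :=
  isClosed_argmax.isLeast_csInf (argmax_nonempty hB hc) ⟨0, fun _ hy => hy.1⟩

theorem yMin_le_yMax (hB : ∀ y, D y ≤ B) (hc : 0 < c) : yMin D c ≤ yMax D c :=
  (isLeast_yMin hB hc).2 (isGreatest_yMax hB hc).1

theorem le_of_mem_argmax_of_lt {c' a b : ℝ} (hcc : c < c') (ha : a ∈ argmax D c')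
    (hb : b ∈ argmax D c) : a ≤ b := by
  by_contra! hab
  have h1 : D b - c' * b ≤ D a - c' * a := ha.2 hb.1
  have h2 : D a - c * a ≤ D b - c * b := hb.2 ha.1
  nlinarith

theorem yMax_le_yMin_of_lt (hB : ∀ y, D y ≤ B) (hc : 0 < c) {c' : ℝ} (hcc : c < c') :
    yMax D c' ≤ yMin D c :=
  le_of_mem_argmax_of_lt hcc (isGreatest_yMax hB (hc.trans hcc)).1 (isLeast_yMin hB hc).1

theorem yMax_antitoneOn (hB : ∀ y, D y ≤ B) : AntitoneOn (yMax D) (Ioi 0) := by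
  intro c hc c' _ hcc
  rcases hcc.eq_or_lt with rfl | hlt
  · exact le_rfl
  · exact (yMax_le_yMin_of_lt hB hc hlt).trans (yMin_le_yMax hB hc)

theorem yMin_antitoneOn (hB : ∀ y, D y ≤ B) : AntitoneOn (yMin D) (Ioi 0) := by
  intro c hc c' hc' hcc
  rcases hcc.eq_or_lt with rfl | hlt
  · exact le_rfl
  · exact (yMin_le_yMax hB hc').trans (yMax_le_yMin_of_lt hB hc hlt)

theorem tendsto_yMax_nhdsGT (hB : ∀ y, D y ≤ B) (hc : 0 < c) :
    Tendsto (yMax D) (𝓝[>] c) (𝓝 (yMin D c)) := by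
  have hbdd : BddAbove (yMax D '' Ioi c) :=
    ⟨yMin D c, forall_mem_image.2 fun _ hc' => yMax_le_yMin_of_lt hB hc hc'⟩
  have hlim := ((yMax_antitoneOn hB).mono (Ioi_subset_Ioi hc.le)).tendsto_nhdsGT hbdd
  convert hlim using 2
  refine le_antisymm ((isLeast_yMin hB hc).2 (mem_argmax_of_tendsto
    (tendsto_id.mono_left nhdsWithin_le_nhds) hlim ?_)) ?_
  · exact eventually_nhdsWithin_of_forall fun c' hc' => (isGreatest_yMax hB (hc.trans hc')).1
  · exact csSup_le (nonempty_Ioi.image _)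
      (forall_mem_image.2 fun _ hc' => yMax_le_yMin_of_lt hB hc hc')

theorem tendsto_yMin_nhdsLT (hB : ∀ y, D y ≤ B) (hc : 0 < c) :
    Tendsto (yMin D) (𝓝[<] c) (𝓝 (yMax D c)) := by
  have hbdd : BddBelow (yMin D '' Ioo 0 c) :=
    ⟨yMax D c, forall_mem_image.2 fun _ hc' => yMax_le_yMin_of_lt hB hc'.1 hc'.2⟩
  have hlim := AntitoneOn.tendsto_nhdsWithin_Ioo_left (nonempty_Ioo.2 hc)
    ((yMin_antitoneOn hB).mono Ioo_subset_Ioi_self) hbdd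
  convert hlim using 2
  refine le_antisymm ?_ ((isGreatest_yMax hB hc).2 (mem_argmax_of_tendsto
    (tendsto_id.mono_left nhdsWithin_le_nhds) hlim ?_))
  · exact le_csInf ((nonempty_Ioo.2 hc).image _)
      (forall_mem_image.2 fun _ hc' => yMax_le_yMin_of_lt hB hc'.1 hc'.2)
  · filter_upwards [Ioo_mem_nhdsLT hc] with c' hc'
    exact (isLeast_yMin hB hc'.1).1

theorem mem_argmax_zero_of_le {y₀ y : ℝ} (hy₀ : y₀ ∈ argmax D 0) (hle : y₀ ≤ y) :
    y ∈ argmax D 0 :=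
  ⟨hy₀.1.trans hle, fun z (hz : 0 ≤ z) => by
    have : D z - 0 * z ≤ D y₀ - 0 * y₀ := hy₀.2 hz
    show D z - 0 * z ≤ D y - 0 * y
    linarith [D.mono hle]⟩

theorem iSup_rat_eq_of_isMaxOn {r m : ℝ} (hm : r ≤ m)
    (hmax : IsMaxOn (fun z => D z - c * z) (Ici r) m) :
    ⨆ q : ℚ, (D (max (q : ℝ) r) - c * max (q : ℝ) r) = D m - c * m := by
  have hbdd : BddAbove (range fun q : ℚ => D (max (q : ℝ) r) - c * max (q : ℝ) r) :=
    ⟨_, forall_mem_range.2 fun q => hmax (le_max_right (q : ℝ) r)⟩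
  refine le_antisymm (ciSup_le fun q => hmax (le_max_right (q : ℝ) r)) ?_
  obtain ⟨u, -, hu, hlim⟩ := Real.exists_seq_rat_strictAnti_tendsto m
  have hcont : ContinuousWithinAt (fun z => D z - c * z) (Ici m) m :=
    (D.right_continuous m).sub (continuousWithinAt_const.mul continuousWithinAt_id)
  refine le_of_tendsto (hcont.tendsto.comp (tendsto_nhdsWithin_iff.2
    ⟨hlim, Eventually.of_forall fun n => (hu n).le⟩)) (Eventually.of_forall fun n => ?_)
  have := le_ciSup hbdd (u n)
  rwa [max_eq_left (hm.trans (hu n).le)] at this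

/-- Whether `r ≤ yMax D c` is read off from countably many values of `D`, which makes `yMax`
measurable in a parameter: by right-continuity, suprema over `[r, ∞)` may be taken over
rationals. -/
theorem le_yMax_iff (hB : ∀ y, D y ≤ B) (hc : 0 < c) {r : ℝ} (hr : 0 ≤ r) :
    r ≤ yMax D c ↔ ⨆ q : ℚ, (D (max (q : ℝ) r) - c * max (q : ℝ) r) =
      ⨆ q : ℚ, (D (max (q : ℝ) 0) - c * max (q : ℝ) 0) := by
  obtain ⟨m, hm, hmax⟩ := exists_isMaxOn_Ici hB hc r
  obtain ⟨⟨hY0, hYmax⟩, hYgreatest⟩ := isGreatest_yMax hB hc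
  rw [iSup_rat_eq_of_isMaxOn hm hmax, iSup_rat_eq_of_isMaxOn hY0 hYmax]
  constructor
  · exact fun h => le_antisymm (hYmax (hr.trans hm)) (hmax h)
  · refine fun h => hm.trans (hYgreatest ⟨hr.trans hm, fun z hz => ?_⟩)
    exact (hYmax hz).trans h.ge

end Lagrangian

/-- `G x y` plays the role of `π x * d x y`, with the density `w = π` as a bound; `sweep` has
null level sets, so the sets `{sweep ≤ t}` grow continuously in measure. -/
structure SearchProblem (α : Type*) [MeasurableSpace α] where
  μ : Measure α
  G : α → StieltjesFunction ℝ
  w : α → ℝ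
  sweep : α → ℝ
  measurable_G : Measurable fun p : α × ℝ => G p.1 p.2
  G_nonneg : ∀ x y, 0 ≤ G x y
  G_le : ∀ x y, G x y ≤ w x
  measurable_w : Measurable w
  integrable_w : Integrable w μ
  integral_w : ∫ x, w x ∂μ = 1
  measurable_sweep : Measurable sweep
  sweep_mem : ∀ x, sweep x ∈ Icc 0 1
  measure_sweep_preimage : ∀ t, μ (sweep ⁻¹' {t}) = 0

namespace SearchProblem

variable {α : Type*} [MeasurableSpace α] (P : SearchProblem α) {c s : ℝ}

theorem w_nonneg (x : α) : 0 ≤ P.w x := (P.G_nonneg x 0).trans (P.G_le x 0)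

theorem measurable_G_comp {f : α → ℝ} (hf : Measurable f) : Measurable fun x => P.G x (f x) :=
  P.measurable_G.comp (measurable_id.prodMk hf)

theorem integrable_G_comp {f : α → ℝ} (hf : Measurable f) :
    Integrable (fun x => P.G x (f x)) P.μ :=
  P.integrable_w.mono' (P.measurable_G_comp hf).aestronglyMeasurable <|
    Eventually.of_forall fun x => (Real.norm_of_nonneg (P.G_nonneg x _)).trans_le (P.G_le x _)

theorem measurable_yMax (hc : 0 < c) : Measurable fun x => yMax (P.G x) c := by
  have hsup : ∀ r, Measurable fun x => ⨆ q : ℚ, (P.G x (max (q : ℝ) r) - c * max (q : ℝ) r) :=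
    fun r => Measurable.iSup fun q => (P.measurable_G_comp measurable_const).sub_const _
  refine measurable_of_Ici fun r => ?_
  have : (fun x => yMax (P.G x) c) ⁻¹' Ici r =
      {x | ⨆ q : ℚ, (P.G x (max (q : ℝ) (max r 0)) - c * max (q : ℝ) (max r 0)) =
        ⨆ q : ℚ, (P.G x (max (q : ℝ) 0) - c * max (q : ℝ) 0)} := by
    ext x
    rw [mem_preimage, mem_Ici, mem_ofPred_eq, ← le_yMax_iff (P.G_le x) hc (le_max_right r 0),
      max_le_iff, and_iff_left (isGreatest_yMax (P.G_le x) hc).1.1]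
  rw [this]
  exact measurableSet_eq_fun (hsup _) (hsup 0)

theorem measurable_yMin (hc : 0 < c) : Measurable fun x => yMin (P.G x) c := by
  have hseq : Tendsto (fun n : ℕ => c + 1 / (n + 1)) atTop (𝓝[>] c) :=
    tendsto_nhdsWithin_iff.2 ⟨by simpa using tendsto_one_div_add_atTop_nhds_zero_nat.const_add c,
      Eventually.of_forall fun n => lt_add_of_pos_right c Nat.one_div_pos_of_nat⟩
  exact measurable_of_tendsto_metrizable
    (fun n => P.measurable_yMax (hc.trans (lt_add_of_pos_right c Nat.one_div_pos_of_nat)))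
    (tendsto_pi_nhds.2 fun x => (tendsto_yMax_nhdsGT (P.G_le x) hc).comp hseq)

theorem yMax_le_div (hc : 0 < c) (x : α) : yMax (P.G x) c ≤ P.w x / c :=
  (le_div_of_mem_argmax (P.G_le x) hc (isGreatest_yMax (P.G_le x) hc).1).trans <|
    div_le_div_of_nonneg_right (sub_le_self _ (P.G_nonneg x 0)) hc.le

theorem integrable_yMax (hc : 0 < c) : Integrable (fun x => yMax (P.G x) c) P.μ :=
  (P.integrable_w.div_const c).mono' (P.measurable_yMax hc).aestronglyMeasurable <|
    Eventually.of_forall fun x =>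
      (Real.norm_of_nonneg (isGreatest_yMax (P.G_le x) hc).1.1).trans_le (P.yMax_le_div hc x)

theorem integrable_yMin (hc : 0 < c) : Integrable (fun x => yMin (P.G x) c) P.μ :=
  (P.integrable_yMax hc).mono' (P.measurable_yMin hc).aestronglyMeasurable <|
    Eventually.of_forall fun x =>
      (Real.norm_of_nonneg (isLeast_yMin (P.G_le x) hc).1.1).trans_le (yMin_le_yMax (P.G_le x) hc)

noncomputable def effortMax (c : ℝ) : ℝ := ∫ x, yMax (P.G x) c ∂P.μ

noncomputable def effortMin (c : ℝ) : ℝ := ∫ x, yMin (P.G x) c ∂P.μ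

theorem effortMax_le_one_div (hc : 0 < c) : P.effortMax c ≤ 1 / c :=
  calc P.effortMax c ≤ ∫ x, P.w x / c ∂P.μ :=
        integral_mono (P.integrable_yMax hc) (P.integrable_w.div_const c) (P.yMax_le_div hc)
    _ = 1 / c := by rw [integral_div, P.integral_w]

theorem effortMax_antitoneOn : AntitoneOn P.effortMax (Ioi 0) := fun _ hc _ hc' hcc =>
  integral_mono (P.integrable_yMax hc') (P.integrable_yMax hc)
    fun x => yMax_antitoneOn (P.G_le x) hc hc' hcc

theorem effortMax_le_effortMin_of_lt (hc : 0 < c) {c' : ℝ} (hcc : c < c') :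
    P.effortMax c' ≤ P.effortMin c :=
  integral_mono (P.integrable_yMax (hc.trans hcc)) (P.integrable_yMin hc)
    fun x => yMax_le_yMin_of_lt (P.G_le x) hc hcc

theorem tendsto_effortMax_nhdsGT (hc : 0 < c) :
    Tendsto P.effortMax (𝓝[>] c) (𝓝 (P.effortMin c)) :=
  tendsto_integral_filter_of_dominated_convergence (fun x => P.w x / c)
    (eventually_nhdsWithin_of_forall fun _ hc' =>
      (P.measurable_yMax (hc.trans hc')).aestronglyMeasurable)
    (eventually_nhdsWithin_of_forall fun c' (hc' : c < c') => Eventually.of_forall fun x =>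
      (Real.norm_of_nonneg (isGreatest_yMax (P.G_le x) (hc.trans hc')).1.1).trans_le <|
        (P.yMax_le_div (hc.trans hc') x).trans (div_le_div_of_nonneg_left (P.w_nonneg x) hc hc'.le))
    (P.integrable_w.div_const c) (Eventually.of_forall fun x => tendsto_yMax_nhdsGT (P.G_le x) hc)

theorem tendsto_effortMin_nhdsLT (hc : 0 < c) :
    Tendsto P.effortMin (𝓝[<] c) (𝓝 (P.effortMax c)) := by
  have hc2 : 0 < c / 2 := half_pos hc
  have hnear : ∀ᶠ c' in 𝓝[<] c, c / 2 < c' :=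
    eventually_of_mem (Ioo_mem_nhdsLT (half_lt_self hc)) fun _ h => h.1
  refine tendsto_integral_filter_of_dominated_convergence (fun x => P.w x / (c / 2))
    (hnear.mono fun c' hc' => (P.measurable_yMin (hc2.trans hc')).aestronglyMeasurable)
    (hnear.mono fun c' hc' => Eventually.of_forall fun x => ?_) (P.integrable_w.div_const _)
    (Eventually.of_forall fun x => tendsto_yMin_nhdsLT (P.G_le x) hc)
  have hc'0 := hc2.trans hc'
  rw [Real.norm_of_nonneg (isLeast_yMin (P.G_le x) hc'0).1.1]
  exact (yMin_le_yMax (P.G_le x) hc'0).trans <| (P.yMax_le_div hc'0 x).trans <|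
    div_le_div_of_nonneg_left (P.w_nonneg x) hc2 hc'.le

/-- The Lagrange multiplier (price of effort) at which total effort `s` is spent. -/
noncomputable def price (s : ℝ) : ℝ := sInf {c | 0 < c ∧ P.effortMax c ≤ s}

theorem price_set_nonempty (hs : 0 < s) : {c | 0 < c ∧ P.effortMax c ≤ s}.Nonempty :=
  ⟨1 / s, by positivity, (P.effortMax_le_one_div (by positivity)).trans_eq (one_div_one_div s)⟩

theorem effortMin_price_le (hs : 0 < s) (hp : 0 < P.price s) : P.effortMin (P.price s) ≤ s := by
  refine le_of_tendsto (P.tendsto_effortMax_nhdsGT hp)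
    (eventually_nhdsWithin_of_forall fun c' hc' => ?_)
  obtain ⟨e, he, hec⟩ := exists_lt_of_csInf_lt (P.price_set_nonempty hs) hc'
  exact (P.effortMax_antitoneOn he.1 (he.1.trans hec) hec.le).trans he.2

theorem le_effortMax_price (hp : 0 < P.price s) : s ≤ P.effortMax (P.price s) := by
  refine ge_of_tendsto (P.tendsto_effortMin_nhdsLT hp) ?_
  filter_upwards [Ioo_mem_nhdsLT hp] with c' hc'
  set e := (c' + P.price s) / 2
  have hce : c' < e := by simp only [e]; linarith [hc'.2]
  have hep : e < P.price s := by simp only [e]; linarith [hc'.2]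
  have : s < P.effortMax e := by
    by_contra! hle
    exact notMem_of_lt_csInf hep ⟨0, fun _ h => h.1.le⟩ ⟨hc'.1.trans hce, hle⟩
  exact this.le.trans (P.effortMax_le_effortMin_of_lt hc'.1 hce)

theorem price_pos (hs : 0 < s) (hc : 0 < c) (h : s < P.effortMax c) : 0 < P.price s :=
  hc.trans_le <| le_csInf (P.price_set_nonempty hs) fun e he => by
    by_contra! hec
    exact h.not_ge ((P.effortMax_antitoneOn he.1 hc hec.le).trans he.2)

theorem price_anti {s' : ℝ} (hs : 0 < s) (hss : s ≤ s') : P.price s' ≤ P.price s :=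
  csInf_le_csInf ⟨0, fun _ h => h.1.le⟩ (P.price_set_nonempty hs) fun _ h => ⟨h.1, h.2.trans hss⟩

noncomputable def mix (c t : ℝ) : α → ℝ :=
  sweepMix P.sweep (fun x => yMin (P.G x) c) (fun x => yMax (P.G x) c) t

noncomputable def lagrangeAlloc (s : ℝ) : α → ℝ :=
  P.mix (P.price s) (firstHit (fun t => ∫ x, P.mix (P.price s) t x ∂P.μ) s)

theorem mix_mem_argmax (hc : 0 < c) (t : ℝ) (x : α) : P.mix c t x ∈ argmax (P.G x) c := by
  rcases sweepMix_eq_or_eq (h := P.sweep) (f := fun x => yMin (P.G x) c)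
    (g := fun x => yMax (P.G x) c) t x with h | h <;> rw [mix, h]
  exacts [(isLeast_yMin (P.G_le x) hc).1, (isGreatest_yMax (P.G_le x) hc).1]

theorem mix_le_yMax (hc : 0 < c) (t : ℝ) (x : α) : P.mix c t x ≤ yMax (P.G x) c :=
  (isGreatest_yMax (P.G_le x) hc).2 (P.mix_mem_argmax hc t x)

theorem yMin_le_mix (hc : 0 < c) (t : ℝ) (x : α) : yMin (P.G x) c ≤ P.mix c t x :=
  (isLeast_yMin (P.G_le x) hc).2 (P.mix_mem_argmax hc t x)

theorem measurable_mix (hc : 0 < c) (t : ℝ) : Measurable (P.mix c t) :=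
  measurable_sweepMix P.measurable_sweep (P.measurable_yMin hc) (P.measurable_yMax hc) t

theorem integrable_mix (hc : 0 < c) (t : ℝ) : Integrable (P.mix c t) P.μ :=
  (P.integrable_yMax hc).mono' (P.measurable_mix hc t).aestronglyMeasurable <|
    Eventually.of_forall fun x =>
      (Real.norm_of_nonneg (P.mix_mem_argmax hc t x).1).trans_le (P.mix_le_yMax hc t x)

theorem continuous_integral_mix (hc : 0 < c) : Continuous fun t => ∫ x, P.mix c t x ∂P.μ :=
  continuous_integral_sweepMix P.measurable_sweep P.measure_sweep_preimage (P.measurable_yMin hc)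
    (P.measurable_yMax hc) (P.integrable_yMin hc) (P.integrable_yMax hc)

theorem integral_mix_zero : ∫ x, P.mix c 0 x ∂P.μ = P.effortMin c :=
  integral_sweepMix_zero (fun x => (P.sweep_mem x).1) (P.measure_sweep_preimage 0)

theorem integral_mix_one : ∫ x, P.mix c 1 x ∂P.μ = P.effortMax c := by
  rw [mix, sweepMix_one fun x => (P.sweep_mem x).2, effortMax]

theorem integral_lagrangeAlloc (hs : 0 < s) (hp : 0 < P.price s) :
    ∫ x, P.lagrangeAlloc s x ∂P.μ = s :=
  apply_firstHit (P.continuous_integral_mix hp)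
    (P.integral_mix_zero.trans_le (P.effortMin_price_le hs hp))
    (P.le_effortMax_price hp |>.trans_eq P.integral_mix_one.symm)

/-- At a common price the sweep threshold grows with `s`; a strictly lower price lets every
maximizer at the old price sit below every maximizer at the new one. -/
theorem lagrangeAlloc_mono (hs : 0 < s) {s' : ℝ} (hss : s ≤ s') (hp' : 0 < P.price s') (x : α) :
    P.lagrangeAlloc s x ≤ P.lagrangeAlloc s' x := by
  have hanti := P.price_anti hs hss
  have hp : 0 < P.price s := hp'.trans_le hanti
  rcases hanti.eq_or_lt with heq | hlt
  · have h1 : s' ≤ ∫ x, P.mix (P.price s) 1 x ∂P.μ := by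
      rw [P.integral_mix_one, ← heq]
      exact P.le_effortMax_price hp'
    rw [lagrangeAlloc, lagrangeAlloc, heq]
    exact sweepMix_mono (fun x => yMin_le_yMax (P.G_le x) hp) (firstHit_mono hss h1) x
  · calc P.lagrangeAlloc s x ≤ yMax (P.G x) (P.price s) := P.mix_le_yMax hp _ x
      _ ≤ yMin (P.G x) (P.price s') := yMax_le_yMin_of_lt (P.G_le x) hp' hlt
      _ ≤ P.lagrangeAlloc s' x := P.yMin_le_mix hp' _ x

structure IsOptimalAlloc (s : ℝ) (f : α → ℝ) : Prop where
  measurable : Measurable f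
  nonneg : ∀ x, 0 ≤ f x
  integral_eq : ∫ x, f x ∂P.μ = s
  le_of_integral_eq : ∀ g : α → ℝ, Measurable g → (∀ x, 0 ≤ g x) → Integrable g P.μ →
    ∫ x, g x ∂P.μ = s → ∫ x, P.G x (g x) ∂P.μ ≤ ∫ x, P.G x (f x) ∂P.μ

theorem integral_G_le_of_ae_mem_argmax (hc : 0 ≤ c) {f g : α → ℝ} (hf : Measurable f)
    (hfi : Integrable f P.μ) (hmax : ∀ᵐ x ∂P.μ, f x ∈ argmax (P.G x) c) (hg : Measurable g)
    (hg0 : ∀ x, 0 ≤ g x) (hgi : Integrable g P.μ) (hle : ∫ x, g x ∂P.μ ≤ ∫ x, f x ∂P.μ) :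
    ∫ x, P.G x (g x) ∂P.μ ≤ ∫ x, P.G x (f x) ∂P.μ := by
  have key : ∫ x, (P.G x (g x) - c * g x) ∂P.μ ≤ ∫ x, (P.G x (f x) - c * f x) ∂P.μ :=
    integral_mono_ae ((P.integrable_G_comp hg).sub (hgi.const_mul c))
      ((P.integrable_G_comp hf).sub (hfi.const_mul c)) (hmax.mono fun x hx => hx.2 (hg0 x))
  rw [integral_sub (P.integrable_G_comp hg) (hgi.const_mul c),
    integral_sub (P.integrable_G_comp hf) (hfi.const_mul c), integral_const_mul,
    integral_const_mul] at key
  nlinarith [mul_le_mul_of_nonneg_left hle hc]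

theorem isOptimalAlloc_of_ae_mem_argmax (hc : 0 ≤ c) {f : α → ℝ} (hf : Measurable f)
    (hf0 : ∀ x, 0 ≤ f x) (hfi : Integrable f P.μ) (hfs : ∫ x, f x ∂P.μ = s)
    (hmax : ∀ᵐ x ∂P.μ, f x ∈ argmax (P.G x) c) : P.IsOptimalAlloc s f :=
  ⟨hf, hf0, hfs, fun _ hg hg0 hgi hgs =>
    P.integral_G_le_of_ae_mem_argmax hc hf hfi hmax hg hg0 hgi (hgs.trans hfs.symm).le⟩

theorem isOptimalAlloc_zero : P.IsOptimalAlloc 0 0 := by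
  refine ⟨measurable_const, fun _ => le_rfl, integral_zero _ _,
    fun g _ hg0 hgi hgs => le_of_eq (integral_congr_ae ?_)⟩
  filter_upwards [(integral_eq_zero_iff_of_nonneg hg0 hgi).1 hgs] with x hx
  simp [hx]

theorem isOptimalAlloc_lagrangeAlloc (hs : 0 < s) (hp : 0 < P.price s) :
    P.IsOptimalAlloc s (P.lagrangeAlloc s) :=
  P.isOptimalAlloc_of_ae_mem_argmax hp.le (P.measurable_mix hp _)
    (fun x => (P.mix_mem_argmax hp _ x).1) (P.integrable_mix hp _)
    (P.integral_lagrangeAlloc hs hp) (Eventually.of_forall (P.mix_mem_argmax hp _))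

def IsUniformlyOptimal (F : ℝ → α → ℝ) : Prop :=
  (∀ s, 0 ≤ s → P.IsOptimalAlloc s (F s)) ∧ ∀ x, MonotoneOn (fun s => F s x) (Ici 0)

theorem isUniformlyOptimal_of_forall_price_pos (h : ∀ s, 0 < s → 0 < P.price s) :
    P.IsUniformlyOptimal fun s => if 0 < s then P.lagrangeAlloc s else 0 := by
  refine ⟨fun s hs => ?_, fun x s _ s' _ hss => ?_⟩
  · rcases hs.lt_or_eq with hs | rfl
    · simpa [hs] using P.isOptimalAlloc_lagrangeAlloc hs (h s hs)
    · simpa using P.isOptimalAlloc_zero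
  · dsimp only
    split_ifs with h1 h2 h2
    · exact P.lagrangeAlloc_mono h1 hss (h s' h2) x
    · exact absurd (h1.trans_le hss) h2
    · exact (P.mix_mem_argmax (h s' h2) _ x).1
    · exact le_rfl

/-- The effort that can be spent profitably, `⨆ c > 0, effortMax c`, is finite. -/
def Saturates : Prop := BddAbove (range fun n : ℕ => P.effortMax (1 / (n + 1)))

noncomputable def peak (x : α) : ℝ := ⨆ n : ℕ, yMax (P.G x) (1 / (n + 1))

def peakSet : Set α := {x | BddAbove (range fun n : ℕ => yMax (P.G x) (1 / (n + 1)))}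

theorem monotone_yMax_one_div (x : α) : Monotone fun n : ℕ => yMax (P.G x) (1 / (n + 1)) :=
  fun _ _ hij => yMax_antitoneOn (P.G_le x) (mem_Ioi.2 Nat.one_div_pos_of_nat)
    (mem_Ioi.2 Nat.one_div_pos_of_nat) (Nat.one_div_le_one_div hij)

theorem peak_nonneg (x : α) : 0 ≤ P.peak x :=
  Real.iSup_nonneg fun _ => (isGreatest_yMax (P.G_le x) Nat.one_div_pos_of_nat).1.1

theorem measurable_peak : Measurable P.peak :=
  Measurable.iSup fun _ => P.measurable_yMax Nat.one_div_pos_of_nat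

theorem measurableSet_peakSet : MeasurableSet P.peakSet :=
  measurableSet_bddAbove_range fun _ => P.measurable_yMax Nat.one_div_pos_of_nat

theorem tendsto_yMax_peak {x : α} (hx : x ∈ P.peakSet) :
    Tendsto (fun n : ℕ => yMax (P.G x) (1 / (n + 1))) atTop (𝓝 (P.peak x)) :=
  tendsto_atTop_ciSup (P.monotone_yMax_one_div x) hx

theorem peak_mem_argmax {x : α} (hx : x ∈ P.peakSet) : P.peak x ∈ argmax (P.G x) 0 :=
  mem_argmax_of_tendsto tendsto_one_div_add_atTop_nhds_zero_nat (P.tendsto_yMax_peak hx)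
    (Eventually.of_forall fun _ => (isGreatest_yMax (P.G_le x) Nat.one_div_pos_of_nat).1)

theorem yMax_le_peak {x : α} (hx : x ∈ P.peakSet) (hc : 0 < c) : yMax (P.G x) c ≤ P.peak x := by
  obtain ⟨n, hn⟩ := exists_nat_one_div_lt hc
  exact (yMax_antitoneOn (P.G_le x) (mem_Ioi.2 Nat.one_div_pos_of_nat) hc hn.le).trans
    (le_ciSup hx n)

theorem ae_mem_peakSet_and_integrable_peak
    (hsat : P.Saturates) :
    (∀ᵐ x ∂P.μ, x ∈ P.peakSet) ∧ Integrable P.peak P.μ :=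
  ae_bddAbove_and_integrable_iSup (fun _ => P.measurable_yMax Nat.one_div_pos_of_nat)
    (fun _ => P.integrable_yMax Nat.one_div_pos_of_nat)
    (fun _ x => (isGreatest_yMax (P.G_le x) Nat.one_div_pos_of_nat).1.1) P.monotone_yMax_one_div
    hsat

theorem tendsto_effortMax_integral_peak
    (hsat : P.Saturates) :
    Tendsto (fun n : ℕ => P.effortMax (1 / (n + 1))) atTop (𝓝 (∫ x, P.peak x ∂P.μ)) :=
  integral_tendsto_of_tendsto_of_monotone (fun _ => P.integrable_yMax Nat.one_div_pos_of_nat)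
    (P.ae_mem_peakSet_and_integrable_peak hsat).2 (Eventually.of_forall P.monotone_yMax_one_div)
    ((P.ae_mem_peakSet_and_integrable_peak hsat).1.mono fun _ hx => P.tendsto_yMax_peak hx)

theorem price_pos_of_lt_integral_peak
    (hsat : P.Saturates) (hs : 0 < s)
    (hsS : s < ∫ x, P.peak x ∂P.μ) : 0 < P.price s :=
  let ⟨_, hn⟩ := ((P.tendsto_effortMax_integral_peak hsat).eventually (lt_mem_nhds hsS)).exists
  P.price_pos hs Nat.one_div_pos_of_nat hn

/-- Effort beyond `∫ peak` cannot raise the detection probability; it is spread along `w`,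
where it does no harm. -/
noncomputable def peakFill (s : ℝ) (x : α) : ℝ := P.peak x + (s - ∫ y, P.peak y ∂P.μ) * P.w x

theorem peak_le_peakFill (hs : ∫ x, P.peak x ∂P.μ ≤ s) (x : α) : P.peak x ≤ P.peakFill s x :=
  le_add_of_nonneg_right (mul_nonneg (sub_nonneg.2 hs) (P.w_nonneg x))

theorem peakFill_mono {s' : ℝ} (hss : s ≤ s') (x : α) : P.peakFill s x ≤ P.peakFill s' x := by
  unfold peakFill
  nlinarith [P.w_nonneg x]

theorem isOptimalAlloc_peakFill (hsat : P.Saturates) (hs : ∫ x, P.peak x ∂P.μ ≤ s) :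
    P.IsOptimalAlloc s (P.peakFill s) := by
  obtain ⟨hae, hint⟩ := P.ae_mem_peakSet_and_integrable_peak hsat
  refine P.isOptimalAlloc_of_ae_mem_argmax le_rfl
    (P.measurable_peak.add (measurable_const.mul P.measurable_w))
    (fun x => (P.peak_nonneg x).trans (P.peak_le_peakFill hs x))
    (hint.add (P.integrable_w.const_mul _)) ?_ ?_
  · unfold peakFill
    rw [integral_add hint (P.integrable_w.const_mul _), integral_const_mul, P.integral_w]
    ring
  · filter_upwards [hae] with x hx
    exact mem_argmax_zero_of_le (P.peak_mem_argmax hx) (P.peak_le_peakFill hs x)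

theorem isOptimalAlloc_indicator_lagrangeAlloc
    (hsat : P.Saturates) (hs : 0 < s)
    (hsS : s < ∫ x, P.peak x ∂P.μ) :
    P.IsOptimalAlloc s (P.peakSet.indicator (P.lagrangeAlloc s)) := by
  have hp := P.price_pos_of_lt_integral_peak hsat hs hsS
  have heq : P.peakSet.indicator (P.lagrangeAlloc s) =ᵐ[P.μ] P.lagrangeAlloc s := by
    filter_upwards [(P.ae_mem_peakSet_and_integrable_peak hsat).1] with x hx
    exact indicator_of_mem hx _
  refine P.isOptimalAlloc_of_ae_mem_argmax hp.le
    ((P.measurable_mix hp _).indicator P.measurableSet_peakSet)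
    (indicator_nonneg fun x _ => (P.mix_mem_argmax hp _ x).1)
    ((P.integrable_mix hp _).indicator P.measurableSet_peakSet)
    ((integral_congr_ae heq).trans (P.integral_lagrangeAlloc hs hp)) ?_
  filter_upwards [heq] with x hx
  rw [hx]
  exact P.mix_mem_argmax hp _ x

theorem indicator_lagrangeAlloc_le_peakFill (hp : 0 < P.price s) {s' : ℝ}
    (hs' : ∫ x, P.peak x ∂P.μ ≤ s') (x : α) :
    P.peakSet.indicator (P.lagrangeAlloc s) x ≤ P.peakFill s' x := by
  by_cases hx : x ∈ P.peakSet
  · rw [indicator_of_mem hx]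
    exact (P.mix_le_yMax hp _ x).trans <| (P.yMax_le_peak hx hp).trans (P.peak_le_peakFill hs' x)
  · rw [indicator_of_notMem hx]
    exact (P.peak_nonneg x).trans (P.peak_le_peakFill hs' x)

noncomputable def saturatedAlloc (s : ℝ) : α → ℝ :=
  if s ≤ 0 then 0 else
    if s < ∫ x, P.peak x ∂P.μ then P.peakSet.indicator (P.lagrangeAlloc s) else P.peakFill s

theorem isOptimalAlloc_saturatedAlloc (hsat : P.Saturates) (hs : 0 ≤ s) :
    P.IsOptimalAlloc s (P.saturatedAlloc s) := by
  unfold saturatedAlloc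
  split_ifs with h0 hsS
  · rw [le_antisymm h0 hs]
    exact P.isOptimalAlloc_zero
  · exact P.isOptimalAlloc_indicator_lagrangeAlloc hsat (not_le.1 h0) hsS
  · exact P.isOptimalAlloc_peakFill hsat (not_lt.1 hsS)

theorem saturatedAlloc_mono (hsat : P.Saturates) (hs : 0 ≤ s) {s' : ℝ} (hss : s ≤ s') (x : α) :
    P.saturatedAlloc s x ≤ P.saturatedAlloc s' x := by
  rcases hs.eq_or_lt with rfl | hs0
  · simpa [saturatedAlloc] using (P.isOptimalAlloc_saturatedAlloc hsat hss).nonneg x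
  have hs0' := hs0.trans_le hss
  simp only [saturatedAlloc, not_le.2 hs0, not_le.2 hs0', if_false]
  set S := ∫ x, P.peak x ∂P.μ
  by_cases hsS : s < S <;> by_cases hsS' : s' < S <;> simp only [hsS, hsS', if_true, if_false]
  · exact indicator_le_indicator
      (P.lagrangeAlloc_mono hs0 hss (P.price_pos_of_lt_integral_peak hsat hs0' hsS') x)
  · exact P.indicator_lagrangeAlloc_le_peakFill (P.price_pos_of_lt_integral_peak hsat hs0 hsS)
      (not_lt.1 hsS') x
  · exact absurd (hss.trans_lt hsS') hsS
  · exact P.peakFill_mono hss x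

theorem exists_isUniformlyOptimal : ∃ F, P.IsUniformlyOptimal F := by
  by_cases hsat : P.Saturates
  · exact ⟨P.saturatedAlloc, fun _ hs => P.isOptimalAlloc_saturatedAlloc hsat hs,
      fun x _ hs _ _ hss => P.saturatedAlloc_mono hsat hs hss x⟩
  · refine ⟨_, P.isUniformlyOptimal_of_forall_price_pos fun s hs => ?_⟩
    obtain ⟨_, ⟨n, rfl⟩, hn⟩ := not_bddAbove_iff.1 hsat s
    exact P.price_pos hs Nat.one_div_pos_of_nat hn

end SearchProblem

/-- The class `Φ(E)` of search plans with cumulative effort `E`. -/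
def searchPlans {α : Type*} [MeasurableSpace α] (μ : Measure α) (E : ℝ → ℝ) :
    Set (α → ℝ → ℝ) :=
  {φ | (∀ t, 0 ≤ t → Measurable fun x => φ x t) ∧ (∀ x t, 0 ≤ t → 0 ≤ φ x t) ∧
    (∀ x, MonotoneOn (φ x) (Ici 0)) ∧ ∀ t, 0 ≤ t → ∫ x, φ x t ∂μ = E t}

/-- At a time `t` with `E t = 0` the integral constraint alone allows a non-integrable allocation;
integrability comes from comparing with a later time of positive effort. -/
theorem integrable_of_mem_searchPlans {α : Type*} [MeasurableSpace α] {μ : Measure α}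
    {E : ℝ → ℝ} (hEpos : ∀ t, 0 < t → 0 < E t) {φ : α → ℝ → ℝ} (hφ : φ ∈ searchPlans μ E)
    {t : ℝ} (ht : 0 ≤ t) : Integrable (fun x => φ x t) μ := by
  have ht1 : 0 < t + 1 := by linarith
  have hint : Integrable (fun x => φ x (t + 1)) μ := by
    by_contra h
    exact (hEpos _ ht1).ne ((integral_undef h).symm.trans (hφ.2.2.2 _ ht1.le))
  exact hint.mono' (hφ.1 t ht).aestronglyMeasurable <| Eventually.of_forall fun x =>
    (Real.norm_of_nonneg (hφ.2.1 x t ht)).trans_le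
      (hφ.2.2.1 x ht ht1.le (lt_add_one t).le)

theorem SearchProblem.exists_uniformlyOptimal_plan {α : Type*} [MeasurableSpace α]
    (P : SearchProblem α) {E : ℝ → ℝ} (hE0 : ∀ t, 0 ≤ t → 0 ≤ E t)
    (hEmono : MonotoneOn E (Ici 0)) (hEpos : ∀ t, 0 < t → 0 < E t) :
    ∃ φstar ∈ searchPlans P.μ E, ∀ φ ∈ searchPlans P.μ E, ∀ t, 0 ≤ t →
      ∫ x, P.G x (φ x t) ∂P.μ ≤ ∫ x, P.G x (φstar x t) ∂P.μ := by
  obtain ⟨F, hopt, hmono⟩ := P.exists_isUniformlyOptimal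
  refine ⟨fun x t => F (E t) x, ⟨fun t ht => (hopt _ (hE0 t ht)).measurable,
    fun x t ht => (hopt _ (hE0 t ht)).nonneg x,
    fun x t ht t' ht' htt => hmono x (hE0 t ht) (hE0 t' ht') (hEmono ht ht' htt),
    fun t ht => (hopt _ (hE0 t ht)).integral_eq⟩, fun φ hφ t ht => ?_⟩
  exact (hopt _ (hE0 t ht)).le_of_integral_eq _ (hφ.1 t ht) (fun x => hφ.2.1 x t ht)
    (integrable_of_mem_searchPlans hEpos hφ ht) (hφ.2.2.2 t ht)

theorem exists_sweep {n : ℕ} (i : Fin n) : ∃ h : (Fin n → ℝ) → ℝ, Measurable h ∧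
    (∀ x, h x ∈ Icc 0 1) ∧ ∀ t, volume (h ⁻¹' {t}) = 0 := by
  set g : ℝ → ℝ := fun u => Real.arctan u / Real.pi + 1 / 2
  have hg : StrictMono g := fun a b hab => by
    simp only [g, add_lt_add_iff_right]
    exact div_lt_div_of_pos_right (Real.arctan_strictMono hab) Real.pi_pos
  refine ⟨fun x => g (x i), hg.monotone.measurable.comp (measurable_pi_apply i), fun x => ?_,
    fun t => ?_⟩
  · have h1 : -(1 / 2 : ℝ) < Real.arctan (x i) / Real.pi := by
      rw [lt_div_iff₀ Real.pi_pos]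
      linarith [Real.neg_pi_div_two_lt_arctan (x i)]
    have h2 : Real.arctan (x i) / Real.pi < 1 / 2 := by
      rw [div_lt_iff₀ Real.pi_pos]
      linarith [Real.arctan_lt_pi_div_two (x i)]
    simp only [mem_Icc, g]
    constructor <;> linarith
  · rw [volume_pi]
    exact Measure.pi_eval_preimage_null (α := fun _ : Fin n => ℝ) (fun _ => volume) (i := i)
      (s := g ⁻¹' {t})
      ((subsingleton_singleton.preimage hg.injective).measure_zero volume)

theorem exists_searchProblem {n : ℕ} (hn : 0 < n) {X : Set (Fin n → ℝ)} {π : (Fin n → ℝ) → ℝ}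
    (hπmeas : Measurable π) (hπ0 : ∀ x, 0 ≤ π x) (hπzero : ∀ x ∉ X, π x = 0)
    (hπint : ∫ x, π x = 1) {d : (Fin n → ℝ) → ℝ → ℝ} (hdmeas : Measurable (Function.uncurry d))
    (hdrange : ∀ x ∈ X, ∀ y ∈ Ici (0 : ℝ), d x y ∈ Icc (0 : ℝ) 1)
    (hdmono : ∀ x ∈ X, MonotoneOn (d x) (Ici 0))
    (hdrc : ∀ x ∈ X, ∀ y ∈ Ici (0 : ℝ), ContinuousWithinAt (d x) (Ici y) y) :
    ∃ P : SearchProblem (Fin n → ℝ), P.μ = volume.restrict X ∧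
      ∀ x y, 0 ≤ y → P.G x y = d x y * π x := by
  have hmono : ∀ x, MonotoneOn (fun y => d x y * π x) (Ici 0) := fun x => by
    by_cases hx : x ∈ X
    · exact fun a ha b hb hab => mul_le_mul_of_nonneg_right (hdmono x hx ha hb hab) (hπ0 x)
    · simpa [hπzero x hx] using monotoneOn_const
  have hrc : ∀ x y, 0 ≤ y → ContinuousWithinAt (fun y => d x y * π x) (Ici y) y :=
    fun x y hy => by
      by_cases hx : x ∈ X
      · exact (hdrc x hx y hy).mul continuousWithinAt_const
      · simpa [hπzero x hx] using continuousWithinAt_const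
  have hbound : ∀ x y, 0 ≤ d x (max y 0) * π x ∧ d x (max y 0) * π x ≤ π x := fun x y => by
    by_cases hx : x ∈ X
    · obtain ⟨h0, h1⟩ := hdrange x hx _ (le_max_right y 0)
      exact ⟨mul_nonneg h0 (hπ0 x), mul_le_of_le_one_left (hπ0 x) h1⟩
    · simp [hπzero x hx]
  have hπi : Integrable π := by
    by_contra h
    rw [integral_undef h] at hπint
    exact zero_ne_one hπint
  obtain ⟨h, hmeas, hmem, hnull⟩ := exists_sweep (⟨0, hn⟩ : Fin n)
  refine ⟨{ μ := volume.restrict X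
            G := fun x => .ofMonotoneOnIci _ (hmono x) (hrc x)
            w := π
            sweep := h
            measurable_G := (hdmeas.comp (measurable_fst.prodMk
              (measurable_snd.max measurable_const))).mul (hπmeas.comp measurable_fst)
            G_nonneg := fun x y => (hbound x y).1
            G_le := fun x y => (hbound x y).2
            measurable_w := hπmeas
            integrable_w := hπi.restrict
            integral_w := (setIntegral_eq_integral_of_forall_compl_eq_zero hπzero).trans hπint
            measurable_sweep := hmeas
            sweep_mem := hmem
            measure_sweep_preimage := fun t =>
              nonpos_iff_eq_zero.1 ((Measure.restrict_apply_le X _).trans_eq (hnull t)) },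
    rfl, fun x y hy => by simp [max_eq_left hy]⟩

theorem exists_uniformlyOptimal_plan_fin_zero (X : Set (Fin 0 → ℝ)) {π : (Fin 0 → ℝ) → ℝ}
    (hπzero : ∀ x ∉ X, π x = 0) (hπint : ∫ x, π x = 1) (d : (Fin 0 → ℝ) → ℝ → ℝ)
    {E : ℝ → ℝ} (hE0 : ∀ t, 0 ≤ t → 0 ≤ E t) (hEmono : MonotoneOn E (Ici 0)) :
    ∃ φstar ∈ searchPlans (volume.restrict X) E, ∀ φ ∈ searchPlans (volume.restrict X) E,
      ∀ t, 0 ≤ t → ∫ x in X, d x (φ x t) * π x ≤ ∫ x in X, d x (φstar x t) * π x := by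
  have hint : ∀ f : (Fin 0 → ℝ) → ℝ, ∫ x, f x = f 0 := fun f => by
    rw [volume_pi, Measure.pi_of_empty, integral_dirac]
    exact congrArg f (Subsingleton.elim _ _)
  have hX : X = univ := eq_univ_of_forall fun x => by
    by_contra hx
    have := (hint π).symm.trans hπint
    rw [Subsingleton.elim 0 x, hπzero x hx] at this
    exact zero_ne_one this
  subst hX
  rw [Measure.restrict_univ]
  refine ⟨fun _ t => E t, ⟨fun _ _ => measurable_const, fun _ t ht => hE0 t ht, fun _ => hEmono,
    fun t _ => by rw [hint]⟩, fun φ hφ t ht => le_of_eq ?_⟩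
  rw [hint, hint, ← hint (φ · t), hφ.2.2.2 t ht]

end SearchPlan

open SearchPlan

theorem uniformly_optimal_exists_continuous_general
    {n : ℕ} (X : Set (Fin n → ℝ))
    (π : (Fin n → ℝ) → ℝ) (hπmeas : Measurable π)
    (hπpos : ∀ x ∈ X, 0 < π x) (hπzero : ∀ x ∉ X, π x = 0)
    (hπint : ∫ x, π x = 1)
    (d : (Fin n → ℝ) → ℝ → ℝ)
    (hdmeas : Measurable (Function.uncurry d))
    (hdrange : ∀ x ∈ X, ∀ y ∈ Set.Ici (0:ℝ), d x y ∈ Set.Icc (0:ℝ) 1)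
    (hdmono : ∀ x ∈ X, MonotoneOn (d x) (Set.Ici 0))
    (hdrc : ∀ x ∈ X, ∀ y ∈ Set.Ici (0:ℝ), ContinuousWithinAt (d x) (Set.Ici y) y)
    (E : ℝ → ℝ) (hE0 : ∀ t, 0 ≤ t → 0 ≤ E t)
    (hEmono : MonotoneOn E (Set.Ici 0))
    (hEpos : ∀ t, 0 < t → 0 < E t) :
    ∃ φstar : (Fin n → ℝ) → ℝ → ℝ,
      (∀ t, 0 ≤ t → Measurable fun x => φstar x t) ∧
      (∀ x t, 0 ≤ t → 0 ≤ φstar x t) ∧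
      (∀ x, MonotoneOn (φstar x) (Set.Ici 0)) ∧
      (∀ t, 0 ≤ t → ∫ x in X, φstar x t = E t) ∧
      ∀ φ : (Fin n → ℝ) → ℝ → ℝ,
        (∀ t, 0 ≤ t → Measurable fun x => φ x t) →
        (∀ x t, 0 ≤ t → 0 ≤ φ x t) →
        (∀ x, MonotoneOn (φ x) (Set.Ici 0)) →
        (∀ t, 0 ≤ t → ∫ x in X, φ x t = E t) →
        ∀ t, 0 ≤ t →
          ∫ x in X, d x (φ x t) * π x ≤ ∫ x in X, d x (φstar x t) * π x := by
  suffices ∃ φstar ∈ searchPlans (volume.restrict X) E, ∀ φ ∈ searchPlans (volume.restrict X) E,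
      ∀ t, 0 ≤ t → ∫ x in X, d x (φ x t) * π x ≤ ∫ x in X, d x (φstar x t) * π x by
    obtain ⟨φstar, ⟨h1, h2, h3, h4⟩, hopt⟩ := this
    exact ⟨φstar, h1, h2, h3, h4, fun φ g1 g2 g3 g4 => hopt φ ⟨g1, g2, g3, g4⟩⟩
  rcases Nat.eq_zero_or_pos n with rfl | hn
  · exact exists_uniformlyOptimal_plan_fin_zero X hπzero hπint d hE0 hEmono
  have hπ0 : ∀ x, 0 ≤ π x := fun x => by
    by_cases hx : x ∈ X
    exacts [(hπpos x hx).le, (hπzero x hx).ge]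
  obtain ⟨P, hμ, hG⟩ :=
    exists_searchProblem hn hπmeas hπ0 hπzero hπint hdmeas hdrange hdmono hdrc
  obtain ⟨φstar, hφstar, hopt⟩ := P.exists_uniformlyOptimal_plan hE0 hEmono hEpos
  rw [hμ] at hφstar hopt
  refine ⟨φstar, hφstar, fun φ hφ t ht => ?_⟩
  have hval : ∀ ψ ∈ searchPlans (volume.restrict X) E,
      ∫ x, P.G x (ψ x t) ∂volume.restrict X = ∫ x in X, d x (ψ x t) * π x :=
    fun ψ hψ => integral_congr_ae (Eventually.of_forall fun x => hG x _ (hψ.2.1 x t ht))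
  rw [← hval φ hφ, ← hval φstar hφstar]
  exact hopt φ hφ t ht

/-- Existence of a uniformly optimal search plan in the continuous case
(Theorem 1(ii) of the paper): if `X ⊆ ℝⁿ` is measurable, `π` a probability density supported
on `X`, `d` a jointly measurable detection function with `d x 0 = 0` and `d x ·` nondecreasing
and right-continuous, and `E` a cumulative effort function, then there is a search plan `φ*`
in `Φ(E)` maximizing the subjective detection probability at every time. -/
theorem uniformly_optimal_exists_continuous
    {n : ℕ} (X : Set (Fin n → ℝ)) (hX : MeasurableSet X)
    (π : (Fin n → ℝ) → ℝ) (hπmeas : Measurable π)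
    (hπpos : ∀ x ∈ X, 0 < π x) (hπzero : ∀ x ∉ X, π x = 0)
    (hπint : ∫ x, π x = 1)
    (d : (Fin n → ℝ) → ℝ → ℝ)
    (hdmeas : Measurable (Function.uncurry d))
    (hdrange : ∀ x ∈ X, ∀ y ∈ Set.Ici (0:ℝ), d x y ∈ Set.Icc (0:ℝ) 1)
    (hd0 : ∀ x ∈ X, d x 0 = 0)
    (hdmono : ∀ x ∈ X, MonotoneOn (d x) (Set.Ici 0))
    (hdrc : ∀ x ∈ X, ∀ y ∈ Set.Ici (0:ℝ), ContinuousWithinAt (d x) (Set.Ici y) y)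
    (E : ℝ → ℝ) (hE0 : ∀ t, 0 ≤ t → 0 ≤ E t)
    (hEmono : MonotoneOn E (Set.Ici 0))
    (hEpos : ∀ t, 0 < t → 0 < E t) :
    ∃ φstar : (Fin n → ℝ) → ℝ → ℝ,
      (∀ t, 0 ≤ t → Measurable fun x => φstar x t) ∧
      (∀ x t, 0 ≤ t → 0 ≤ φstar x t) ∧
      (∀ x, MonotoneOn (φstar x) (Set.Ici 0)) ∧
      (∀ t, 0 ≤ t → ∫ x in X, φstar x t = E t) ∧
      ∀ φ : (Fin n → ℝ) → ℝ → ℝ,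
        (∀ t, 0 ≤ t → Measurable fun x => φ x t) →
        (∀ x t, 0 ≤ t → 0 ≤ φ x t) →
        (∀ x, MonotoneOn (φ x) (Set.Ici 0)) →
        (∀ t, 0 ≤ t → ∫ x in X, φ x t = E t) →
        ∀ t, 0 ≤ t →
          ∫ x in X, d x (φ x t) * π x ≤ ∫ x in X, d x (φstar x t) * π x :=
  uniformly_optimal_exists_continuous_general X π hπmeas hπpos hπzero hπint d hdmeas hdrange hdmono
    hdrc E hE0 hEmono hEpos
end

section
/- Let X be a nonempty finite set, π a target density on X, and d a regular detection function on X such that q_x(y) → 0 as y → ∞ for each x ∈ X, where q_x(y) = π(x)·∂d(x,y)/∂y. Let λ > 0 and define f(x) = q_x^{-1}(λ) for x ∈ X, and set E = ∑_{x∈X} f(x). Then for every g : X → [0,∞) with ∑_{x∈X} g(x) = E, one has ∑_{x∈X} π(x) d(x, g(x)) ≤ ∑_{x∈X} π(x) d(x, f(x)). -/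
open Finset

lemma tangent_le {F F' : ℝ → ℝ}
    (hderiv : ∀ y ∈ Set.Ici (0:ℝ), HasDerivWithinAt F (F' y) (Set.Ici 0) y)
    (hanti : StrictAntiOn F' (Set.Ici 0)) {a b : ℝ} (ha : 0 ≤ a) (hb : 0 ≤ b) :
    F b - F a ≤ F' a * (b - a) := by
  have hcont : ContinuousOn F (Set.Ici 0) := fun y hy => (hderiv y hy).continuousWithinAt
  rcases lt_trichotomy a b with h | h | h
  · have hco : ContinuousOn F (Set.Icc a b) := hcont.mono (by
      intro z hz; exact le_trans ha hz.1)
    have hdo : ∀ c ∈ Set.Ioo a b, HasDerivAt F (F' c) c := by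
      intro c hc
      have hc0 : 0 < c := lt_of_le_of_lt ha hc.1
      exact (hderiv c hc0.le).hasDerivAt (Ici_mem_nhds hc0)
    obtain ⟨c, hc, hceq⟩ := exists_hasDerivAt_eq_slope F F' h hco hdo
    have h1 : F' c * (b - a) = F b - F a := by
      rw [hceq]; exact div_mul_cancel₀ _ (by linarith)
    have h2 : F' c < F' a := hanti ha (le_trans ha (le_of_lt hc.1)) hc.1
    nlinarith
  · simp [h]
  · have hco : ContinuousOn F (Set.Icc b a) := hcont.mono (by
      intro z hz; exact le_trans hb hz.1)
    have hdo : ∀ c ∈ Set.Ioo b a, HasDerivAt F (F' c) c := by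
      intro c hc
      have hc0 : 0 < c := lt_of_le_of_lt hb hc.1
      exact (hderiv c hc0.le).hasDerivAt (Ici_mem_nhds hc0)
    obtain ⟨c, hc, hceq⟩ := exists_hasDerivAt_eq_slope F F' h hco hdo
    have h1 : F' c * (a - b) = F a - F b := by
      rw [hceq]; exact div_mul_cancel₀ _ (by linarith)
    have h2 : F' a < F' c := hanti (le_trans hb hc.1.le) ha hc.2
    nlinarith


/-- In the discrete case, for a regular detection function with rate of
return `q_x(y) = π x * d' x y` tending to `0` at infinity, the allocation `f x = q_x⁻¹ λ`
maximizes the subjective detection probability among all allocations of total effort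
`E = ∑ x, f x`. -/
theorem stone_allocation_optimal_discrete
    {X : Type*} [Fintype X] [Nonempty X]
    (π : X → ℝ) (hπpos : ∀ x, 0 < π x) (hπsum : ∑ x, π x = 1)
    (d d' : X → ℝ → ℝ)
    (hdrange : ∀ x, ∀ y ∈ Set.Ici (0:ℝ), d x y ∈ Set.Icc (0:ℝ) 1)
    (hd0 : ∀ x, d x 0 = 0)
    (hderiv : ∀ x, ∀ y ∈ Set.Ici (0:ℝ), HasDerivWithinAt (d x) (d' x y) (Set.Ici 0) y)
    (hd'cont : ∀ x, ContinuousOn (d' x) (Set.Ici 0))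
    (hd'pos : ∀ x, ∀ y ∈ Set.Ici (0:ℝ), 0 < d' x y)
    (hd'anti : ∀ x, StrictAntiOn (d' x) (Set.Ici 0))
    (htend : ∀ x, Filter.Tendsto (fun y => π x * d' x y) Filter.atTop (nhds 0))
    (qinv : X → ℝ → ℝ)
    (hqinv : ∀ x, ∀ l : ℝ, 0 < l →
      (l ≤ π x * d' x 0 → 0 ≤ qinv x l ∧ π x * d' x (qinv x l) = l) ∧
      (π x * d' x 0 < l → qinv x l = 0))
    (lam : ℝ) (hlam : 0 < lam)
    (f : X → ℝ) (hf : ∀ x, f x = qinv x lam)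
    (E : ℝ) (hE : E = ∑ x, f x) :
    ∀ g : X → ℝ, (∀ x, 0 ≤ g x) → ∑ x, g x = E →
      ∑ x, π x * d x (g x) ≤ ∑ x, π x * d x (f x) := by
  intro g hg hgsum
  have hf0 : ∀ x, 0 ≤ f x := by
    intro x
    rw [hf x]
    rcases le_or_gt lam (π x * d' x 0) with h | h
    · exact ((hqinv x lam hlam).1 h).1
    · rw [(hqinv x lam hlam).2 h]
  have key : ∀ x, π x * d x (g x) - π x * d x (f x) ≤ lam * (g x - f x) := by
    intro x
    have h1 : d x (g x) - d x (f x) ≤ d' x (f x) * (g x - f x) :=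
      tangent_le (hderiv x) (hd'anti x) (hf0 x) (hg x)
    have h2 : π x * (d x (g x) - d x (f x)) ≤ π x * (d' x (f x) * (g x - f x)) :=
      mul_le_mul_of_nonneg_left h1 (hπpos x).le
    have h3 : π x * d' x (f x) * (g x - f x) ≤ lam * (g x - f x) := by
      rcases le_or_gt lam (π x * d' x 0) with h | h
      · have := ((hqinv x lam hlam).1 h).2
        rw [hf x, this]
      · have hfx : f x = 0 := by rw [hf x, (hqinv x lam hlam).2 h]
        rw [hfx]
        have hgx : 0 ≤ g x - 0 := by simpa using hg x
        exact mul_le_mul_of_nonneg_right h.le hgx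
    nlinarith [h2, h3]
  have hsum : ∑ x, (π x * d x (g x) - π x * d x (f x)) ≤ ∑ x, lam * (g x - f x) :=
    Finset.sum_le_sum fun x _ => key x
  have hz : ∑ x, lam * (g x - f x) = 0 := by
    rw [← Finset.mul_sum, Finset.sum_sub_distrib, hgsum, hE, sub_self, mul_zero]
  rw [Finset.sum_sub_distrib] at hsum
  linarith
end

section
/- Let X ⊆ ℝⁿ be a measurable set, π a probability density positive on X and zero off X, and d : X × [0,∞) → [0,1] a jointly measurable regular detection function with q_x(y) → 0 as y → ∞ for each x ∈ X, where q_x(y) = π(x)·∂d(x,y)/∂y. Let λ > 0, suppose x ↦ q_x^{-1}(λ) is measurable, define f(x) = q_x^{-1}(λ), and suppose E = ∫_X f(x) dx is finite. Then for every measurable g : X → [0,∞) with ∫_X g(x) dx = E, one has ∫_X π(x) d(x, g(x)) dx ≤ ∫_X π(x) d(x, f(x)) dx. -/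
open MeasureTheory

/-- In the continuous case, for a regular detection function with rate of
return `q_x(y) = π x * d' x y` tending to `0` at infinity, the allocation `f x = q_x⁻¹ λ`
(assumed measurable with finite total cost `E = ∫_X f`) maximizes the subjective detection
probability among all measurable nonnegative allocations of total cost `E`. -/
theorem stone_allocation_optimal_continuous
    {n : ℕ} (X : Set (Fin n → ℝ)) (hX : MeasurableSet X)
    (π : (Fin n → ℝ) → ℝ) (hπmeas : Measurable π)
    (hπpos : ∀ x ∈ X, 0 < π x) (hπzero : ∀ x ∉ X, π x = 0)
    (hπint : ∫ x, π x = 1)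
    (d d' : (Fin n → ℝ) → ℝ → ℝ)
    (hdmeas : Measurable (Function.uncurry d))
    (hdrange : ∀ x ∈ X, ∀ y ∈ Set.Ici (0:ℝ), d x y ∈ Set.Icc (0:ℝ) 1)
    (hd0 : ∀ x ∈ X, d x 0 = 0)
    (hderiv : ∀ x ∈ X, ∀ y ∈ Set.Ici (0:ℝ), HasDerivWithinAt (d x) (d' x y) (Set.Ici 0) y)
    (hd'cont : ∀ x ∈ X, ContinuousOn (d' x) (Set.Ici 0))
    (hd'pos : ∀ x ∈ X, ∀ y ∈ Set.Ici (0:ℝ), 0 < d' x y)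
    (hd'anti : ∀ x ∈ X, StrictAntiOn (d' x) (Set.Ici 0))
    (htend : ∀ x ∈ X, Filter.Tendsto (fun y => π x * d' x y) Filter.atTop (nhds 0))
    (qinv : (Fin n → ℝ) → ℝ → ℝ)
    (hqinv : ∀ x ∈ X, ∀ l : ℝ, 0 < l →
      (l ≤ π x * d' x 0 → 0 ≤ qinv x l ∧ π x * d' x (qinv x l) = l) ∧
      (π x * d' x 0 < l → qinv x l = 0))
    (lam : ℝ) (hlam : 0 < lam)
    (f : (Fin n → ℝ) → ℝ) (hfmeas : Measurable f)
    (hf : ∀ x, f x = qinv x lam)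
    (E : ℝ) (hE0 : 0 ≤ E)
    (hE : ∫⁻ x in X, ENNReal.ofReal (f x) = ENNReal.ofReal E) :
    ∀ g : (Fin n → ℝ) → ℝ, Measurable g → (∀ x, 0 ≤ g x) →
      (∫⁻ x in X, ENNReal.ofReal (g x)) = ENNReal.ofReal E →
      ∫ x in X, π x * d x (g x) ≤ ∫ x in X, π x * d x (f x) := by
  intro g hgmeas hg0 hgE
  -- d x is continuous on [0, ∞)
  have hdcont : ∀ x ∈ X, ContinuousOn (d x) (Set.Ici 0) := fun x hx y hy =>
    (hderiv x hx y hy).continuousWithinAt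
  -- concavity bound : d x b - d x a ≤ d' x a * (b - a) for a, b ≥ 0
  have hconc : ∀ x ∈ X, ∀ a ∈ Set.Ici (0:ℝ), ∀ b ∈ Set.Ici (0:ℝ),
      d x b - d x a ≤ d' x a * (b - a) := by
    intro x hx a ha b hb
    rcases lt_trichotomy a b with hab | hab | hab
    · obtain ⟨c, hc, hcs⟩ := exists_hasDerivAt_eq_slope (d x) (d' x) hab
        ((hdcont x hx).mono (Set.Icc_subset_Ici_iff hab.le |>.2 ha))
        (fun y hy => by
          have hy0 : (0:ℝ) < y := lt_of_le_of_lt ha hy.1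
          exact (hderiv x hx y hy0.le).hasDerivAt (Ici_mem_nhds hy0))
    -- d x b - d x a = d' x c * (b - a), with d' x c ≤ d' x a
      have hcd : d x b - d x a = d' x c * (b - a) := by
        rw [eq_div_iff (by linarith : b - a ≠ 0)] at hcs; linarith
      have hcle : d' x c < d' x a :=
        hd'anti x hx ha (le_trans ha hc.1.le) hc.1
      nlinarith
    · simp [hab]
    · obtain ⟨c, hc, hcs⟩ := exists_hasDerivAt_eq_slope (d x) (d' x) hab
        ((hdcont x hx).mono (Set.Icc_subset_Ici_iff hab.le |>.2 hb))
        (fun y hy => by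
          have hy0 : (0:ℝ) < y := lt_of_le_of_lt hb hy.1
          exact (hderiv x hx y hy0.le).hasDerivAt (Ici_mem_nhds hy0))
      have hcd : d x a - d x b = d' x c * (a - b) := by
        rw [eq_div_iff (by linarith : a - b ≠ 0)] at hcs; linarith
      have hcle : d' x a < d' x c :=
        hd'anti x hx (le_trans hb hc.1.le) ha hc.2
      nlinarith
  -- nonnegativity of f on X
  have hf0 : ∀ x ∈ X, 0 ≤ f x := by
    intro x hx
    rw [hf x]
    rcases le_or_gt lam (π x * d' x 0) with h | h
    · exact ((hqinv x hx lam hlam).1 h).1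
    · rw [(hqinv x hx lam hlam).2 h]
  -- key pointwise inequality
  have key : ∀ x ∈ X, π x * d x (g x) - π x * d x (f x) ≤ lam * (g x - f x) := by
    intro x hx
    have hπx := hπpos x hx
    have hfx := hf0 x hx
    have hgx := hg0 x
    have hc := hconc x hx (f x) hfx (g x) hgx
    rcases le_or_gt lam (π x * d' x 0) with h | h
    · have heq : π x * d' x (f x) = lam := by
        rw [hf x]; exact ((hqinv x hx lam hlam).1 h).2
      nlinarith
    · have hz : f x = 0 := by rw [hf x]; exact (hqinv x hx lam hlam).2 h
      rw [hz] at hc ⊢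
      rw [hd0 x hx] at hc ⊢
      nlinarith
  -- π is integrable
  have hπintg : Integrable π := by
    by_contra h
    rw [integral_undef h] at hπint
    norm_num at hπint
  -- integrability of f and g on X
  have hintf : IntegrableOn f X := by
    refine ⟨(hfmeas.aestronglyMeasurable).restrict, ?_⟩
    rw [hasFiniteIntegral_iff_ofReal
      ((ae_restrict_iff' hX).2 (ae_of_all _ hf0))]
    rw [hE]
    exact ENNReal.ofReal_lt_top
  have hintg : IntegrableOn g X := by
    refine ⟨(hgmeas.aestronglyMeasurable).restrict, ?_⟩
    rw [hasFiniteIntegral_iff_ofReal (ae_of_all _ hg0)]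
    rw [hgE]
    exact ENNReal.ofReal_lt_top
  have hintfE : ∫ x in X, f x = E := by
    rw [integral_eq_lintegral_of_nonneg_ae
      ((ae_restrict_iff' hX).2 (ae_of_all _ hf0))
      (hfmeas.aestronglyMeasurable).restrict, hE, ENNReal.toReal_ofReal hE0]
  have hintgE : ∫ x in X, g x = E := by
    rw [integral_eq_lintegral_of_nonneg_ae (ae_of_all _ hg0)
      (hgmeas.aestronglyMeasurable).restrict, hgE, ENNReal.toReal_ofReal hE0]
  -- integrability of π * d ∘ (id, h) for h = f, g
  have hdint : ∀ h : (Fin n → ℝ) → ℝ, Measurable h → (∀ x ∈ X, 0 ≤ h x) →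
      IntegrableOn (fun x => π x * d x (h x)) X := by
    intro h hm h0
    have hmeas : Measurable fun x => π x * d x (h x) :=
      hπmeas.mul (hdmeas.comp (measurable_id.prodMk hm))
    refine (hπintg.restrict (s := X)).mono hmeas.aestronglyMeasurable ?_
    refine (ae_restrict_iff' hX).2 (ae_of_all _ fun x hx => ?_)
    have hπx := hπpos x hx
    have hd := hdrange x hx (h x) (h0 x hx)
    rw [Real.norm_eq_abs, Real.norm_eq_abs, abs_of_nonneg (by nlinarith [hd.1] : (0:ℝ) ≤ π x * d x (h x)), abs_of_nonneg hπx.le]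
    nlinarith [hd.2]
  have hintdf := hdint f hfmeas hf0
  have hintdg := hdint g hgmeas (fun x _ => hg0 x)
  -- conclude
  have hmono : ∫ x in X, (π x * d x (g x) - π x * d x (f x)) ≤
      ∫ x in X, lam * (g x - f x) :=
    setIntegral_mono_on (hintdg.sub hintdf) ((hintg.sub hintf).const_mul lam) hX key
  rw [integral_sub hintdg hintdf, integral_const_mul _, integral_sub hintg hintf,
    hintgE, hintfE] at hmono
  simp at hmono
  linarith
end

section
/- Let X be a nonempty finite set, d a regular detection function on X with q_x(y) → 0 as y → ∞ for each x, and π a target density on X. Let x₀, x₁ ∈ X be distinct cells with d(x₀,·) = d(x₁,·), and let π̃ be the target density obtained from π by interchanging the masses at x₀ and x₁ (π̃(x₀) = π(x₁), π̃(x₁) = π(x₀), π̃(x) = π(x) otherwise). Then Q̃(λ) = Q(λ) for all λ > 0, where Q(λ) = ∑_{x∈X} q_x^{-1}(λ) is computed from π and Q̃(λ) = ∑_{x∈X} q̃_x^{-1}(λ) from π̃. Moreover, if π(x₁) > π(x₀), then for every λ with 0 < λ < π(x₁)·∂d(x₀,y)/∂y|_{y=0} one has q̃_{x₀}^{-1}(λ)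 > q_{x₀}^{-1}(λ). -/
open Set

/-!
The swap is a relabelling of the cells by the transposition `σ = (x₀ x₁)`: the new density at `x`
is the old one at `σ x`, and the detection rates at `x` and `σ x` coincide because `d x₀ = d x₁`
determines the derivative on `[0, ∞)`. Since `y ↦ ∂d(x,y)/∂y` is injective there, the inverse
rate of return is determined by the density and the detection rate, so `q̃_x⁻¹ = q_{σ x}⁻¹` and
`Q̃ = Q` by reindexing the sum along `σ`. For the inequality, the new rate at `x₀` is the old one
scaled by `π x₁ / π x₀ > 1`, so it reaches the level `λ` at a later time.
-/

/-- `g` is `q⁻¹` for the rate of return `q y = c * f y`. -/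
def IsRateInverse (c : ℝ) (f g : ℝ → ℝ) : Prop :=
  ∀ l : ℝ, 0 < l → (l ≤ c * f 0 → 0 ≤ g l ∧ c * f (g l) = l) ∧ (c * f 0 < l → g l = 0)

namespace IsRateInverse

variable {c c' : ℝ} {f f' g g' : ℝ → ℝ} {l : ℝ}

theorem congr_rate (hg : IsRateInverse c f g) (hff' : EqOn f f' (Set.Ici 0)) :
    IsRateInverse c f' g := by
  intro l hl
  rw [← hff' self_mem_Ici]
  refine ⟨fun hle => ?_, (hg l hl).2⟩
  obtain ⟨hnonneg, hval⟩ := (hg l hl).1 hle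
  exact ⟨hnonneg, hff' hnonneg ▸ hval⟩

theorem apply_eq (hf : InjOn f (Set.Ici 0)) (hg : IsRateInverse c f g)
    (hg' : IsRateInverse c f g') (hl : 0 < l) : g l = g' l := by
  rcases le_or_gt l (c * f 0) with hle | hlt
  · obtain ⟨hnonneg, hval⟩ := (hg l hl).1 hle
    obtain ⟨hnonneg', hval'⟩ := (hg' l hl).1 hle
    have hc : c ≠ 0 := left_ne_zero_of_mul (hval.trans_ne hl.ne')
    exact hf hnonneg hnonneg' (mul_left_cancel₀ hc (hval.trans hval'.symm))
  · rw [(hg l hl).2 hlt, (hg' l hl).2 hlt]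

theorem lt_of_lt (hf : StrictAntiOn f (Set.Ici 0)) (hfpos : ∀ y ∈ Set.Ici (0 : ℝ), 0 < f y)
    (hcc' : c < c') (hg : IsRateInverse c f g) (hg' : IsRateInverse c' f g') (hl : 0 < l)
    (hl' : l < c' * f 0) : g l < g' l := by
  obtain ⟨hnonneg', hval'⟩ := (hg' l hl).1 hl'.le
  rcases le_or_gt l (c * f 0) with hle | hlt
  · obtain ⟨hnonneg, hval⟩ := (hg l hl).1 hle
    have hc : 0 < c := pos_of_mul_pos_left (by rwa [hval]) (hfpos _ hnonneg).le
    have hlow : c * f (g' l) < c * f (g l) := calc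
      c * f (g' l) < c' * f (g' l) := mul_lt_mul_of_pos_right hcc' (hfpos _ hnonneg')
      _ = c * f (g l) := hval'.trans hval.symm
    exact (hf.lt_iff_gt hnonneg' hnonneg).mp (lt_of_mul_lt_mul_left hlow hc.le)
  · rw [(hg l hl).2 hlt]
    refine hnonneg'.lt_of_ne fun hzero => hl'.ne ?_
    rw [← hval', ← hzero]

end IsRateInverse

theorem eqOn_of_hasDerivWithinAt {s : Set ℝ} (hs : UniqueDiffOn ℝ s) {f f₁' f₂' : ℝ → ℝ}
    (h₁ : ∀ y ∈ s, HasDerivWithinAt f (f₁' y) s y)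
    (h₂ : ∀ y ∈ s, HasDerivWithinAt f (f₂' y) s y) : EqOn f₁' f₂' s :=
  fun y hy => (hs y hy).eq_deriv s (h₁ y hy) (h₂ y hy)

theorem Equiv.apply_swap_apply_of_eq {α β : Type*} [DecidableEq α] {f : α → β} {a b : α}
    (hab : f a = f b) (x : α) : f (Equiv.swap a b x) = f x := by
  rw [Equiv.swap_apply_def]
  split_ifs with hxa hxb
  · rw [hxa, hab]
  · rw [hxb, hab]
  · rfl

theorem sum_rateInverse_eq_of_perm {X : Type*} [Fintype X] (σ : Equiv.Perm X)
    {c c' : X → ℝ} {f g g' : X → ℝ → ℝ} (hf : ∀ x, InjOn (f x) (Set.Ici 0))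
    (hc' : ∀ x, c' x = c (σ x)) (hfσ : ∀ x, EqOn (f x) (f (σ x)) (Set.Ici 0))
    (hg : ∀ x, IsRateInverse (c x) (f x) (g x)) (hg' : ∀ x, IsRateInverse (c' x) (f x) (g' x))
    {l : ℝ} (hl : 0 < l) : ∑ x, g' x l = ∑ x, g x l := by
  refine Fintype.sum_equiv σ _ _ fun x => ?_
  have hg'σ : IsRateInverse (c (σ x)) (f (σ x)) (g' x) := hc' x ▸ (hg' x).congr_rate (hfσ x)
  exact hg'σ.apply_eq (hf (σ x)) (hg (σ x)) hl

theorem swap_density_Q_unchanged_general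
    {X : Type*} [Fintype X] [DecidableEq X]
    (d d' : X → ℝ → ℝ)
    (hderiv : ∀ x, ∀ y ∈ Set.Ici (0:ℝ), HasDerivWithinAt (d x) (d' x y) (Set.Ici 0) y)
    (hd'pos : ∀ x, ∀ y ∈ Set.Ici (0:ℝ), 0 < d' x y)
    (hd'anti : ∀ x, StrictAntiOn (d' x) (Set.Ici 0))
    (π : X → ℝ)
    (x₀ x₁ : X)
    (hsame : d x₀ = d x₁)
    (πt : X → ℝ)
    (hswap₀ : πt x₀ = π x₁) (hswap₁ : πt x₁ = π x₀)
    (hswap : ∀ x, x ≠ x₀ → x ≠ x₁ → πt x = π x)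
    (qinv qtinv : X → ℝ → ℝ)
    (hqinv : ∀ x, ∀ l : ℝ, 0 < l →
      (l ≤ π x * d' x 0 → 0 ≤ qinv x l ∧ π x * d' x (qinv x l) = l) ∧
      (π x * d' x 0 < l → qinv x l = 0))
    (hqtinv : ∀ x, ∀ l : ℝ, 0 < l →
      (l ≤ πt x * d' x 0 → 0 ≤ qtinv x l ∧ πt x * d' x (qtinv x l) = l) ∧
      (πt x * d' x 0 < l → qtinv x l = 0)) :
    (∀ l : ℝ, 0 < l → ∑ x, qtinv x l = ∑ x, qinv x l) ∧
    (π x₀ < π x₁ →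
      ∀ l : ℝ, 0 < l → l < π x₁ * d' x₀ 0 → qinv x₀ l < qtinv x₀ l) := by
  have hπt : ∀ x, πt x = π (Equiv.swap x₀ x₁ x) := by
    intro x
    rw [Equiv.swap_apply_def]
    split_ifs with hx₀ hx₁
    · rw [hx₀, hswap₀]
    · rw [hx₁, hswap₁]
    · exact hswap x hx₀ hx₁
  have hd'swap : ∀ x, EqOn (d' x) (d' (Equiv.swap x₀ x₁ x)) (Set.Ici 0) := fun x =>
    eqOn_of_hasDerivWithinAt (uniqueDiffOn_Ici 0) (hderiv x)
      (Equiv.apply_swap_apply_of_eq hsame x ▸ hderiv (Equiv.swap x₀ x₁ x))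
  refine ⟨fun l hl => sum_rateInverse_eq_of_perm _ (fun x => (hd'anti x).injOn) hπt hd'swap
      hqinv hqtinv hl, fun hlt l hl hl' => ?_⟩
  have hqtinv₀ : IsRateInverse (π x₁) (d' x₀) (qtinv x₀) := hswap₀ ▸ hqtinv x₀
  exact IsRateInverse.lt_of_lt (hd'anti x₀) (hd'pos x₀) hlt (hqinv x₀) hqtinv₀ hl hl'

/-- (Case (i) in the proof of Theorem 3.) Swapping the target-probability
masses of two cells `x₀ ≠ x₁` with identical detection functions leaves `Q` unchanged, and
if `π x₁ > π x₀` the new inverse rate of return at `x₀` strictly exceeds the old one for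
every `0 < λ < π x₁ · ∂d(x₀,y)/∂y |_{y=0}`. -/
theorem swap_density_Q_unchanged
    {X : Type*} [Fintype X] [Nonempty X] [DecidableEq X]
    (d d' : X → ℝ → ℝ)
    (hdrange : ∀ x, ∀ y ∈ Set.Ici (0:ℝ), d x y ∈ Set.Icc (0:ℝ) 1)
    (hd0 : ∀ x, d x 0 = 0)
    (hderiv : ∀ x, ∀ y ∈ Set.Ici (0:ℝ), HasDerivWithinAt (d x) (d' x y) (Set.Ici 0) y)
    (hd'cont : ∀ x, ContinuousOn (d' x) (Set.Ici 0))
    (hd'pos : ∀ x, ∀ y ∈ Set.Ici (0:ℝ), 0 < d' x y)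
    (hd'anti : ∀ x, StrictAntiOn (d' x) (Set.Ici 0))
    (π : X → ℝ) (hπpos : ∀ x, 0 < π x) (hπsum : ∑ x, π x = 1)
    (htend : ∀ x, Filter.Tendsto (fun y => π x * d' x y) Filter.atTop (nhds 0))
    (x₀ x₁ : X) (hne : x₀ ≠ x₁)
    (hsame : d x₀ = d x₁)
    (πt : X → ℝ)
    (hswap₀ : πt x₀ = π x₁) (hswap₁ : πt x₁ = π x₀)
    (hswap : ∀ x, x ≠ x₀ → x ≠ x₁ → πt x = π x)
    (qinv qtinv : X → ℝ → ℝ)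
    (hqinv : ∀ x, ∀ l : ℝ, 0 < l →
      (l ≤ π x * d' x 0 → 0 ≤ qinv x l ∧ π x * d' x (qinv x l) = l) ∧
      (π x * d' x 0 < l → qinv x l = 0))
    (hqtinv : ∀ x, ∀ l : ℝ, 0 < l →
      (l ≤ πt x * d' x 0 → 0 ≤ qtinv x l ∧ πt x * d' x (qtinv x l) = l) ∧
      (πt x * d' x 0 < l → qtinv x l = 0)) :
    (∀ l : ℝ, 0 < l → ∑ x, qtinv x l = ∑ x, qinv x l) ∧
    (π x₀ < π x₁ →
      ∀ l : ℝ, 0 < l → l < π x₁ * d' x₀ 0 → qinv x₀ l < qtinv x₀ l) :=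
  swap_density_Q_unchanged_general d d' hderiv hd'pos hd'anti π x₀ x₁ hsame πt hswap₀ hswap₁ hswap
    qinv qtinv hqinv hqtinv
end

section
/- Let α₁, α₂ > 0, let 1/2 < p < 1 with (1−p)α₂ < pα₁, and let 0 < E ≤ (1/α₁)·ln(pα₁/((1−p)α₂)). Then for all y₁, y₂ ≥ 0 with y₁ + y₂ = E one has p(1 − e^{−α₁ y₁}) + (1−p)(1 − e^{−α₂ y₂}) ≤ p(1 − e^{−α₁ E}); that is, the allocation (y₁, y₂) = (E, 0) placing all effort in cell 1 is optimal. In particular, when the true target cell is 1, the true detection probability of the optimal allocation equals 1 − e^{−α₁E}, which does not depend on p. -/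
/-- (Example 3, Case (i), small budget.) In the two-cell problem with
non-homogeneous exponential detection with rates `α₁, α₂`, target density `(p, 1-p)` with
`(1-p)α₂ < pα₁`, and total effort `0 < E ≤ (1/α₁)·ln(pα₁/((1-p)α₂))`, placing all effort
in cell 1 is optimal: every allocation `(y₁, y₂)` with `y₁ + y₂ = E` has subjective
detection probability at most `p(1 - e^{-α₁E})`. -/
theorem two_cell_nonhomogeneous_optimal_small_budget
    (α₁ α₂ p E : ℝ) (hα₁ : 0 < α₁) (hα₂ : 0 < α₂)
    (hp1 : 1 / 2 < p) (hp2 : p < 1)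
    (hcase : (1 - p) * α₂ < p * α₁)
    (hE0 : 0 < E)
    (hE : E ≤ (1 / α₁) * Real.log (p * α₁ / ((1 - p) * α₂))) :
    ∀ y₁ y₂ : ℝ, 0 ≤ y₁ → 0 ≤ y₂ → y₁ + y₂ = E →
      p * (1 - Real.exp (-(α₁ * y₁))) + (1 - p) * (1 - Real.exp (-(α₂ * y₂))) ≤
        p * (1 - Real.exp (-(α₁ * E))) := by
  intro y₁ y₂ h1 h2 hsum
  have hq0 : 0 < 1 - p := by linarith
  have hratio : 0 < p * α₁ / ((1 - p) * α₂) := by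
    have hp0 : 0 < p := by linarith
    positivity
  have hlog : α₁ * E ≤ Real.log (p * α₁ / ((1 - p) * α₂)) := by
    have := mul_le_mul_of_nonneg_left hE hα₁.le
    calc α₁ * E ≤ α₁ * (1 / α₁ * Real.log (p * α₁ / ((1 - p) * α₂))) := this
      _ = Real.log (p * α₁ / ((1 - p) * α₂)) := by field_simp
  have hexp : Real.exp (α₁ * E) ≤ p * α₁ / ((1 - p) * α₂) := by
    calc Real.exp (α₁ * E) ≤ Real.exp (Real.log (p * α₁ / ((1 - p) * α₂))) :=
          Real.exp_le_exp.mpr hlog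
      _ = _ := Real.exp_log hratio
  have hkey : (1 - p) * α₂ * Real.exp (α₁ * E) ≤ p * α₁ := by
    rw [le_div_iff₀ (by positivity)] at hexp
    linarith [hexp]
  have hmul : Real.exp (α₁ * E) * Real.exp (-(α₁ * E)) = 1 := by
    rw [← Real.exp_add]; simp
  have hEy : Real.exp (-(α₁ * y₁)) - Real.exp (-(α₁ * E)) =
      Real.exp (-(α₁ * E)) * (Real.exp (α₁ * y₂) - 1) := by
    have h : -(α₁ * y₁) = -(α₁ * E) + α₁ * y₂ := by rw [← hsum]; ring
    rw [h, Real.exp_add]; ring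
  have hstep1 : (1 - p) * (1 - Real.exp (-(α₂ * y₂))) ≤ (1 - p) * α₂ * y₂ := by
    nlinarith [Real.add_one_le_exp (-(α₂ * y₂))]
  have hstep2 : (1 - p) * α₂ * y₂ ≤ p * α₁ * Real.exp (-(α₁ * E)) * y₂ := by
    have h := mul_le_mul_of_nonneg_right hkey
      (mul_nonneg (Real.exp_pos (-(α₁ * E))).le h2)
    have e1 : (1 - p) * α₂ * Real.exp (α₁ * E) * (Real.exp (-(α₁ * E)) * y₂)
        = (1 - p) * α₂ * y₂ := by
      calc (1 - p) * α₂ * Real.exp (α₁ * E) * (Real.exp (-(α₁ * E)) * y₂)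
          = (1 - p) * α₂ * y₂ * (Real.exp (α₁ * E) * Real.exp (-(α₁ * E))) := by ring
        _ = (1 - p) * α₂ * y₂ := by rw [hmul]; ring
    linarith [h, e1.ge]
  have hstep3 : p * α₁ * Real.exp (-(α₁ * E)) * y₂ ≤
      p * (Real.exp (-(α₁ * y₁)) - Real.exp (-(α₁ * E))) := by
    rw [hEy]
    have h3 : α₁ * y₂ ≤ Real.exp (α₁ * y₂) - 1 := by
      linarith [Real.add_one_le_exp (α₁ * y₂)]
    have hpn : 0 ≤ p * Real.exp (-(α₁ * E)) :=
      mul_nonneg (by linarith) (Real.exp_pos _).le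
    nlinarith [mul_le_mul_of_nonneg_left h3 hpn]
  linarith
end

section
/- Let a < 0 < b, let β₁ > β₂ > 0, set D = b/β₁ − a/β₂ and L = ln(β₁/β₂), and let E > (b/β₁)·L. Define c₁ = (E − (a/β₂)·L)/(β₁·D) and c₂ = (E − (b/β₁)·L)/(β₂·D), and let f : ℝ → [0,∞) be f(x) = c₁ for 0 ≤ x < b, f(x) = c₂ for a < x < 0, and f(x) = 0 otherwise. Then c₁ ≥ 0, c₂ ≥ 0, ∫_ℝ f(x) dx = E, and for every measurable g : ℝ → [0,∞) with ∫_ℝ g(x) dx = E one has (1/(b−a))·∫_a^b (1 − e^{−α_x g(x)}) dx ≤ (1/(b−a))·∫_a^b (1 − e^{−α_x f(x)}) dx, where α_x = β₁ for x ≥ 0 and α_x = β₂ for x < 0. -/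
/-!
The detection functional `g ↦ ∫ (1 - exp (-α g))` is concave, so each integrand lies below
its tangent at `f`. The levels `c₁, c₂` are chosen so that `β₁ c₁ = β₂ c₂ + ln (β₁/β₂)`, i.e.
the marginal detection rates `α e^{-α f}` agree on `(a,b)` at a common value `λ > 0`.
Integrating the tangent inequalities over `(a,b)` gives `P(g) ≤ P(f) + λ (∫ g - ∫ f)` for the
detection probability `P`, and the budget `∫_{(a,b)} g ≤ E = ∫_{(a,b)} f` finishes the argument.
-/

open MeasureTheory Set Real

lemma one_sub_exp_neg_mul_le_add (α t s : ℝ) :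
    1 - exp (-(α * s)) ≤ 1 - exp (-(α * t)) + α * exp (-(α * t)) * (s - t) := by
  have hexp : exp (-(α * s)) = exp (-(α * t)) * exp (-(α * (s - t))) := by
    rw [← exp_add]; ring_nf
  have := mul_le_mul_of_nonneg_left (add_one_le_exp (-(α * (s - t)))) (exp_pos (-(α * t))).le
  nlinarith

section Lagrangian

variable {X : Type*} [MeasurableSpace X] {μ : Measure X} {s : Set X} {α f g : X → ℝ}

lemma integrableOn_one_sub_exp_neg_mul (hs : μ s ≠ ⊤) (hα : Measurable α) (hf : Measurable f)
    (hαf : ∀ x, 0 ≤ α x * f x) :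
    IntegrableOn (fun x ↦ 1 - exp (-(α x * f x))) s μ := by
  refine Measure.integrableOn_of_bounded (M := 1) hs (by fun_prop) (ae_of_all _ fun x ↦ ?_)
  have h₁ : exp (-(α x * f x)) ≤ 1 := exp_le_one_iff.mpr (neg_nonpos.mpr (hαf x))
  rw [norm_eq_abs, abs_le]
  constructor <;> linarith [exp_pos (-(α x * f x))]

theorem setIntegral_one_sub_exp_neg_mul_le (hs : MeasurableSet s) {lam : ℝ} (hlam : 0 ≤ lam)
    (hmarg : ∀ x ∈ s, α x * exp (-(α x * f x)) = lam)
    (hf : IntegrableOn f s μ) (hg : IntegrableOn g s μ)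
    (hFf : IntegrableOn (fun x ↦ 1 - exp (-(α x * f x))) s μ)
    (hFg : IntegrableOn (fun x ↦ 1 - exp (-(α x * g x))) s μ)
    (hbudget : ∫ x in s, g x ∂μ ≤ ∫ x in s, f x ∂μ) :
    ∫ x in s, 1 - exp (-(α x * g x)) ∂μ ≤ ∫ x in s, 1 - exp (-(α x * f x)) ∂μ := by
  have hlin : IntegrableOn (fun x ↦ lam * (g x - f x)) s μ := (hg.sub hf).const_mul lam
  calc ∫ x in s, 1 - exp (-(α x * g x)) ∂μ
      ≤ ∫ x in s, (1 - exp (-(α x * f x))) + lam * (g x - f x) ∂μ := by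
        refine setIntegral_mono_on hFg (hFf.add hlin) hs fun x hx ↦ ?_
        simpa only [hmarg x hx] using one_sub_exp_neg_mul_le_add (α x) (f x) (g x)
    _ = ∫ x in s, 1 - exp (-(α x * f x)) ∂μ +
          lam * (∫ x in s, g x ∂μ - ∫ x in s, f x ∂μ) := by
        rw [integral_add hFf hlin, integral_const_mul, integral_sub hg hf]
    _ ≤ ∫ x in s, 1 - exp (-(α x * f x)) ∂μ := by
        linarith [mul_nonpos_of_nonneg_of_nonpos hlam (sub_nonpos.mpr hbudget)]

end Lagrangian

noncomputable def twoLevel (a b c₁ c₂ : ℝ) (x : ℝ) : ℝ :=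
  if 0 ≤ x ∧ x < b then c₁ else if a < x ∧ x < 0 then c₂ else 0

section TwoLevel

variable {a b c₁ c₂ : ℝ}

lemma twoLevel_eq_indicator_add_indicator (a b c₁ c₂ : ℝ) :
    twoLevel a b c₁ c₂ = (Ico 0 b).indicator (fun _ ↦ c₁) + (Ioo a 0).indicator (fun _ ↦ c₂) := by
  funext x
  by_cases h : 0 ≤ x ∧ x < b
  · have : ¬(a < x ∧ x < 0) := fun h' ↦ h'.2.not_ge h.1
    simp [twoLevel, h, this]
  · simp [twoLevel, indicator_apply, h]

lemma twoLevel_nonneg (hc₁ : 0 ≤ c₁) (hc₂ : 0 ≤ c₂) (x : ℝ) : 0 ≤ twoLevel a b c₁ c₂ x := by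
  unfold twoLevel; split_ifs <;> first | assumption | exact le_rfl

lemma measurable_twoLevel (a b c₁ c₂ : ℝ) : Measurable (twoLevel a b c₁ c₂) := by
  rw [twoLevel_eq_indicator_add_indicator]
  exact (measurable_const.indicator measurableSet_Ico).add
    (measurable_const.indicator measurableSet_Ioo)

lemma integrable_indicator_const_Ico (a b c : ℝ) : Integrable ((Ico a b).indicator fun _ ↦ c) :=
  (integrable_indicator_iff measurableSet_Ico).mpr (integrableOn_const measure_Ico_lt_top.ne)

lemma integrable_indicator_const_Ioo (a b c : ℝ) : Integrable ((Ioo a b).indicator fun _ ↦ c) :=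
  (integrable_indicator_iff measurableSet_Ioo).mpr (integrableOn_const measure_Ioo_lt_top.ne)

lemma integrable_twoLevel (a b c₁ c₂ : ℝ) : Integrable (twoLevel a b c₁ c₂) := by
  rw [twoLevel_eq_indicator_add_indicator]
  exact (integrable_indicator_const_Ico 0 b c₁).add (integrable_indicator_const_Ioo a 0 c₂)

lemma integral_twoLevel (ha : a ≤ 0) (hb : 0 ≤ b) :
    ∫ x, twoLevel a b c₁ c₂ x = b * c₁ - a * c₂ := by
  rw [twoLevel_eq_indicator_add_indicator,
    integral_add' (integrable_indicator_const_Ico 0 b c₁) (integrable_indicator_const_Ioo a 0 c₂),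
    integral_indicator_const _ measurableSet_Ico, integral_indicator_const _ measurableSet_Ioo,
    Real.volume_real_Ico_of_le hb, Real.volume_real_Ioo_of_le ha, smul_eq_mul, smul_eq_mul]
  ring

lemma setIntegral_Ioo_twoLevel (ha : a < 0) (hb : 0 ≤ b) :
    ∫ x in Ioo a b, twoLevel a b c₁ c₂ x = ∫ x, twoLevel a b c₁ c₂ x := by
  refine setIntegral_eq_integral_of_forall_compl_eq_zero fun x hx ↦ ?_
  rw [mem_Ioo, not_and_or, not_lt, not_lt] at hx
  have h₁ : ¬(0 ≤ x ∧ x < b) := by rintro ⟨h₀, hxb⟩; rcases hx with hx | hx <;> linarith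
  have h₂ : ¬(a < x ∧ x < 0) := by rintro ⟨ha', h₀⟩; rcases hx with hx | hx <;> linarith
  simp [twoLevel, h₁, h₂]

lemma twoRate_mul_exp_neg_twoLevel {β₁ β₂ x : ℝ} (hx : x ∈ Ioo a b)
    (hmarg : β₁ * exp (-(β₁ * c₁)) = β₂ * exp (-(β₂ * c₂))) :
    (if 0 ≤ x then β₁ else β₂) *
        exp (-((if 0 ≤ x then β₁ else β₂) * twoLevel a b c₁ c₂ x)) =
      β₂ * exp (-(β₂ * c₂)) := by
  by_cases h₀ : 0 ≤ x
  · simp [twoLevel, h₀, hx.2, hmarg]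
  · simp [twoLevel, h₀, hx.1, not_le.mp h₀]

theorem intervalIntegral_twoRate_detection_le_twoLevel {β₁ β₂ : ℝ} {g : ℝ → ℝ} (ha : a < 0)
    (hb : 0 ≤ b) (hβ₁ : 0 ≤ β₁) (hβ₂ : 0 ≤ β₂) (hc₁ : 0 ≤ c₁) (hc₂ : 0 ≤ c₂)
    (hmarg : β₁ * exp (-(β₁ * c₁)) = β₂ * exp (-(β₂ * c₂)))
    (hgm : Measurable g) (hg0 : ∀ x, 0 ≤ g x) (hgi : Integrable g)
    (hbudget : ∫ x, g x ≤ ∫ x, twoLevel a b c₁ c₂ x) :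
    ∫ x in a..b, (1 - exp (-((if 0 ≤ x then β₁ else β₂) * g x))) ≤
      ∫ x in a..b, (1 - exp (-((if 0 ≤ x then β₁ else β₂) * twoLevel a b c₁ c₂ x))) := by
  have hα : Measurable fun x : ℝ ↦ if 0 ≤ x then β₁ else β₂ :=
    Measurable.ite measurableSet_Ici measurable_const measurable_const
  have hα0 (x : ℝ) : 0 ≤ if 0 ≤ x then β₁ else β₂ := by split_ifs <;> assumption
  have hbudget' : ∫ x in Ioo a b, g x ≤ ∫ x in Ioo a b, twoLevel a b c₁ c₂ x := by
    rw [setIntegral_Ioo_twoLevel ha hb]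
    exact (setIntegral_le_integral hgi (ae_of_all _ hg0)).trans hbudget
  rw [intervalIntegral.integral_of_le (ha.trans_le hb).le, intervalIntegral.integral_of_le
    (ha.trans_le hb).le, integral_Ioc_eq_integral_Ioo, integral_Ioc_eq_integral_Ioo]
  exact setIntegral_one_sub_exp_neg_mul_le measurableSet_Ioo (by positivity)
    (fun x hx ↦ twoRate_mul_exp_neg_twoLevel hx hmarg) (integrable_twoLevel a b c₁ c₂).integrableOn
    hgi.integrableOn
    (integrableOn_one_sub_exp_neg_mul measure_Ioo_lt_top.ne hα (measurable_twoLevel a b c₁ c₂)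
      fun x ↦ mul_nonneg (hα0 x) (twoLevel_nonneg hc₁ hc₂ x))
    (integrableOn_one_sub_exp_neg_mul measure_Ioo_lt_top.ne hα hgm
      fun x ↦ mul_nonneg (hα0 x) (hg0 x))
    hbudget'

end TwoLevel

section Levels

variable {a b β₁ β₂ E D L c₁ c₂ : ℝ}

lemma mul_exp_neg_mul_eq_of_mul_eq_add_log (hβ₁ : 0 < β₁) (hβ₂ : 0 < β₂)
    (h : β₁ * c₁ = β₂ * c₂ + log (β₁ / β₂)) :
    β₁ * exp (-(β₁ * c₁)) = β₂ * exp (-(β₂ * c₂)) := by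
  rw [h, neg_add, exp_add, exp_neg (log _), exp_log (div_pos hβ₁ hβ₂)]
  field_simp

lemma levels_rate_gap (hβ₁ : β₁ ≠ 0) (hβ₂ : β₂ ≠ 0) (hD : D = b / β₁ - a / β₂) (hD0 : D ≠ 0)
    (hc₁ : c₁ = (E - a / β₂ * L) / (β₁ * D)) (hc₂ : c₂ = (E - b / β₁ * L) / (β₂ * D)) :
    β₁ * c₁ = β₂ * c₂ + L := by
  rw [hc₁, hc₂]
  field_simp
  rw [hD]
  field_simp
  ring

lemma levels_cost (hβ₁ : β₁ ≠ 0) (hβ₂ : β₂ ≠ 0) (hD : D = b / β₁ - a / β₂) (hD0 : D ≠ 0)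
    (hc₁ : c₁ = (E - a / β₂ * L) / (β₁ * D)) (hc₂ : c₂ = (E - b / β₁ * L) / (β₂ * D)) :
    b * c₁ - a * c₂ = E := by
  rw [hc₁, hc₂]
  field_simp
  rw [hD]
  field_simp
  ring

end Levels

/-- (Example 4, large budget.) For the uniform target density on
`(a,b)` (`a < 0 < b`) and the two-rate exponential detection function with rate `β₁` on
`[0,∞)` and `β₂` on `(-∞,0)` (`β₁ > β₂ > 0`), when `E > (b/β₁)·ln(β₁/β₂)` the two-level
allocation `f` (equal to `c₁` on `[0,b)` and `c₂` on `(a,0)`) is feasible and maximizes the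
subjective detection probability among measurable nonnegative allocations of total cost `E`. -/
theorem uniform_two_rate_optimal_large_budget
    (a b β₁ β₂ E : ℝ) (ha : a < 0) (hb : 0 < b)
    (hβ₂ : 0 < β₂) (hβ : β₂ < β₁)
    (D L c₁ c₂ : ℝ)
    (hD : D = b / β₁ - a / β₂) (hL : L = Real.log (β₁ / β₂))
    (hE : b / β₁ * L < E)
    (hc₁ : c₁ = (E - a / β₂ * L) / (β₁ * D))
    (hc₂ : c₂ = (E - b / β₁ * L) / (β₂ * D))
    (f : ℝ → ℝ)
    (hf : ∀ x, f x = if 0 ≤ x ∧ x < b then c₁ else if a < x ∧ x < 0 then c₂ else 0) :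
    0 ≤ c₁ ∧ 0 ≤ c₂ ∧ (∫ x, f x) = E ∧
    ∀ g : ℝ → ℝ, Measurable g → (∀ x, 0 ≤ g x) → (∫ x, g x) = E →
      (1 / (b - a)) * ∫ x in a..b, (1 - Real.exp (-((if 0 ≤ x then β₁ else β₂) * g x))) ≤
        (1 / (b - a)) * ∫ x in a..b, (1 - Real.exp (-((if 0 ≤ x then β₁ else β₂) * f x))) := by
  obtain rfl : f = twoLevel a b c₁ c₂ := funext hf
  have hβ₁ : 0 < β₁ := hβ₂.trans hβ
  have hL0 : 0 < L := hL ▸ log_pos ((one_lt_div hβ₂).mpr hβ)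
  have hD0 : 0 < D := by
    rw [hD]; linarith [div_neg_of_neg_of_pos ha hβ₂, div_pos hb hβ₁]
  have hE0 : 0 < E := (mul_pos (div_pos hb hβ₁) hL0).trans hE
  have hc₁0 : 0 ≤ c₁ :=
    hc₁ ▸ div_nonneg (by nlinarith [div_neg_of_neg_of_pos ha hβ₂]) (by positivity)
  have hc₂0 : 0 ≤ c₂ := hc₂ ▸ div_nonneg (by linarith) (by positivity)
  have hfE : ∫ x, twoLevel a b c₁ c₂ x = E := by
    rw [integral_twoLevel ha.le hb.le]
    exact levels_cost hβ₁.ne' hβ₂.ne' hD hD0.ne' hc₁ hc₂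
  have hmarg := mul_exp_neg_mul_eq_of_mul_eq_add_log hβ₁ hβ₂
    (hL ▸ levels_rate_gap hβ₁.ne' hβ₂.ne' hD hD0.ne' hc₁ hc₂)
  refine ⟨hc₁0, hc₂0, hfE, fun g hgm hg0 hgE ↦ ?_⟩
  refine mul_le_mul_of_nonneg_left ?_ (one_div_nonneg.mpr (by linarith))
  exact intervalIntegral_twoRate_detection_le_twoLevel ha hb.le hβ₁.le hβ₂.le hc₁0 hc₂0 hmarg
    hgm hg0 (.of_integral_ne_zero (hgE ▸ hE0.ne')) (hgE.trans hfE.symm).le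
end

section
/- Let a < 0 < b, let β₁ > β₂ > 0, and let 0 < E ≤ (b/β₁)·ln(β₁/β₂). Let f : ℝ → [0,∞) be f(x) = E/b for 0 ≤ x < b and f(x) = 0 otherwise. Then ∫_ℝ f(x) dx = E and for every measurable g : ℝ → [0,∞) with ∫_ℝ g(x) dx = E one has (1/(b−a))·∫_a^b (1 − e^{−α_x g(x)}) dx ≤ (1/(b−a))·∫_a^b (1 − e^{−α_x f(x)}) dx, where α_x = β₁ for x ≥ 0 and α_x = β₂ for x < 0. -/
/-!
Lagrange multiplier argument. Put `c = E / b` and `λ = β₁ e^{-β₁ c}`. On `[0, b)` the concave map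
`y ↦ 1 - e^{-β₁ y}` lies below its tangent at `c`, whose slope is `λ`; on `(a, 0)` the map
`y ↦ 1 - e^{-β₂ y}` lies below `β₂ y ≤ λ y`, and `β₂ ≤ λ` is exactly the budget condition
`E ≤ (b/β₁) ln(β₁/β₂)`. Hence pointwise on `(a, b)` the detection integrand of `g` is at most
that of `f` plus `λ (g - f)`, and integrating, `∫_{(a,b)} g ≤ E = ∫_{(a,b)} f` kills the extra term.
-/

open MeasureTheory Real Set

theorem one_sub_exp_neg_mul_le_tangent (β c y : ℝ) :
    1 - exp (-(β * y)) ≤ 1 - exp (-(β * c)) + β * exp (-(β * c)) * (y - c) := by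
  have hsplit : exp (-(β * y)) = exp (-(β * c)) * exp (-(β * (y - c))) := by
    rw [← exp_add]; ring_nf
  nlinarith [add_one_le_exp (-(β * (y - c))), exp_pos (-(β * c))]

theorem one_sub_exp_neg_mul_le_mul {β l y : ℝ} (hβl : β ≤ l) (hy : 0 ≤ y) :
    1 - exp (-(β * y)) ≤ l * y := by
  have := one_sub_exp_neg_mul_le_tangent β 0 y
  simp only [mul_zero, neg_zero, exp_zero, sub_self, mul_one, sub_zero, zero_add] at this
  nlinarith

theorem le_mul_exp_neg_of_le_log {p q t : ℝ} (hp : 0 < p) (hq : 0 < q) (ht : t ≤ log (p / q)) :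
    q ≤ p * exp (-t) := by
  have : exp t ≤ p / q := (le_log_iff_exp_le (div_pos hp hq)).1 ht
  rw [exp_neg, ← div_eq_mul_inv, le_div_iff₀ (exp_pos t)]
  rwa [le_div_iff₀ hq, mul_comm] at this

theorem two_rate_le_supporting_line {β₁ β₂ b c x y : ℝ} (hβ₂ : β₂ ≤ β₁ * exp (-(β₁ * c)))
    (hx : x < b) (hy : 0 ≤ y) :
    1 - exp (-((if 0 ≤ x then β₁ else β₂) * y)) ≤
      1 - exp (-((if 0 ≤ x then β₁ else β₂) * if 0 ≤ x ∧ x < b then c else 0)) +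
        β₁ * exp (-(β₁ * c)) * (y - if 0 ≤ x ∧ x < b then c else 0) := by
  by_cases h0 : 0 ≤ x
  · simpa only [h0, hx, and_self, if_true] using one_sub_exp_neg_mul_le_tangent β₁ c y
  · simpa only [h0, false_and, if_false, mul_zero, neg_zero, exp_zero, sub_self, zero_add,
      sub_zero] using one_sub_exp_neg_mul_le_mul hβ₂ hy

variable {X : Type*} [MeasurableSpace X] {μ : Measure X}

theorem integrable_one_sub_exp_neg [IsFiniteMeasure μ] {h : X → ℝ}
    (hm : AEStronglyMeasurable h μ) (h0 : ∀ x, 0 ≤ h x) :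
    Integrable (fun x => 1 - exp (-h x)) μ := by
  refine Integrable.of_bound (by fun_prop) 1 (ae_of_all _ fun x => ?_)
  have := exp_le_one_iff.2 (neg_nonpos.2 (h0 x))
  rw [norm_eq_abs, abs_le]
  constructor <;> linarith [exp_pos (-h x)]

theorem integrable_one_sub_exp_neg_two_rate {ν : Measure ℝ} [IsFiniteMeasure ν] {β₁ β₂ : ℝ}
    (hβ₁ : 0 ≤ β₁) (hβ₂ : 0 ≤ β₂) {h : ℝ → ℝ} (hm : AEStronglyMeasurable h ν)
    (h0 : ∀ x, 0 ≤ h x) :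
    Integrable (fun x => 1 - exp (-((if 0 ≤ x then β₁ else β₂) * h x))) ν := by
  have hα : Measurable fun x : ℝ => if 0 ≤ x then β₁ else β₂ :=
    Measurable.ite measurableSet_Ici measurable_const measurable_const
  refine integrable_one_sub_exp_neg (hα.aestronglyMeasurable.mul hm) fun x => ?_
  exact mul_nonneg (by split_ifs <;> assumption) (h0 x)

theorem integral_le_integral_of_le_add_mul_sub {u v g f : X → ℝ} {l : ℝ} (hl : 0 ≤ l)
    (hu : Integrable u μ) (hv : Integrable v μ) (hg : Integrable g μ) (hf : Integrable f μ)
    (h : ∀ᵐ x ∂μ, u x ≤ v x + l * (g x - f x)) (hgf : ∫ x, g x ∂μ ≤ ∫ x, f x ∂μ) :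
    ∫ x, u x ∂μ ≤ ∫ x, v x ∂μ := by
  have hlin : Integrable (fun x => l * (g x - f x)) μ := (hg.sub hf).const_mul l
  calc ∫ x, u x ∂μ ≤ ∫ x, v x + l * (g x - f x) ∂μ := integral_mono_ae hu (hv.add hlin) h
    _ = ∫ x, v x ∂μ + l * (∫ x, g x ∂μ - ∫ x, f x ∂μ) := by
      rw [integral_add hv hlin, integral_const_mul, integral_sub hg hf]
    _ ≤ ∫ x, v x ∂μ := by nlinarith

theorem setIntegral_indicator_Ico_const {s : Set ℝ} {u v : ℝ} (hsub : Ico u v ⊆ s) (huv : u ≤ v)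
    (c : ℝ) :
    ∫ x in s, (Ico u v).indicator (fun _ => c) x = (v - u) * c := by
  rw [integral_indicator_const c measurableSet_Ico, measureReal_restrict_apply measurableSet_Ico,
    inter_eq_left.2 hsub, Real.volume_real_Ico_of_le huv, smul_eq_mul]

/-- (Example 4, small budget.) For the uniform target density on `(a,b)`
(`a < 0 < b`) and the two-rate exponential detection function with rate `β₁` on `[0,∞)` and
`β₂` on `(-∞,0)` (`β₁ > β₂ > 0`), when `0 < E ≤ (b/β₁)·ln(β₁/β₂)` the allocation placing
constant effort density `E/b` on `[0,b)` and zero elsewhere is feasible and maximizes the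
subjective detection probability among measurable nonnegative allocations of total cost `E`. -/
theorem uniform_two_rate_optimal_small_budget
    (a b β₁ β₂ E : ℝ) (ha : a < 0) (hb : 0 < b)
    (hβ₂ : 0 < β₂) (hβ : β₂ < β₁)
    (hE0 : 0 < E) (hE : E ≤ b / β₁ * Real.log (β₁ / β₂))
    (f : ℝ → ℝ)
    (hf : ∀ x, f x = if 0 ≤ x ∧ x < b then E / b else 0) :
    (∫ x, f x) = E ∧
    ∀ g : ℝ → ℝ, Measurable g → (∀ x, 0 ≤ g x) → (∫ x, g x) = E →
      (1 / (b - a)) * ∫ x in a..b, (1 - Real.exp (-((if 0 ≤ x then β₁ else β₂) * g x))) ≤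
        (1 / (b - a)) * ∫ x in a..b, (1 - Real.exp (-((if 0 ≤ x then β₁ else β₂) * f x))) := by
  have hβ₁ : 0 < β₁ := hβ₂.trans hβ
  have hf_ind : f = (Ico 0 b).indicator fun _ => E / b := funext fun x => by simp [hf, indicator]
  have hf_int : Integrable f := by
    rw [hf_ind]; exact (integrable_indicator_iff measurableSet_Ico).2 (integrableOn_const (by simp))
  have hf_setIntegral {s : Set ℝ} (hsub : Ico 0 b ⊆ s) : ∫ x in s, f x = E := by
    rw [hf_ind, setIntegral_indicator_Ico_const hsub hb.le, sub_zero]; field_simp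
  refine ⟨by simpa using hf_setIntegral (subset_univ _), fun g hg hg0 hgE => ?_⟩
  -- the Bochner integral of a non-integrable `g` is the junk value `0 ≠ E`
  have hg_int : Integrable g := by_contra fun h => hE0.ne (integral_undef h ▸ hgE)
  have hf0 (x : ℝ) : 0 ≤ f x := by rw [hf]; split_ifs <;> positivity
  have hl : β₂ ≤ β₁ * exp (-(β₁ * (E / b))) := le_mul_exp_neg_of_le_log hβ₁ hβ₂ (by
    rw [div_mul_eq_mul_div, le_div_iff₀ hβ₁] at hE
    rw [mul_div_assoc', div_le_iff₀ hb]
    linarith)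
  have hab : a ≤ b := (ha.trans hb).le
  rw [intervalIntegral.integral_of_le hab, intervalIntegral.integral_of_le hab,
    integral_Ioc_eq_integral_Ioo, integral_Ioc_eq_integral_Ioo]
  refine mul_le_mul_of_nonneg_left ?_ (div_nonneg zero_le_one (by linarith))
  refine integral_le_integral_of_le_add_mul_sub (hβ₂.le.trans hl)
    (integrable_one_sub_exp_neg_two_rate hβ₁.le hβ₂.le hg.aestronglyMeasurable hg0)
    (integrable_one_sub_exp_neg_two_rate hβ₁.le hβ₂.le hf_int.1.restrict hf0)
    hg_int.integrableOn hf_int.integrableOn ?_ ?_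
  · filter_upwards [ae_restrict_mem measurableSet_Ioo] with x hx
    rw [hf]
    exact two_rate_le_supporting_line hl hx.2 (hg0 x)
  · rw [hf_setIntegral (Ico_subset_Ioo_left ha), ← hgE]
    exact setIntegral_le_integral hg_int (ae_of_all _ hg0)
end

section
/- Let σ > 0, α > 0, and 0 < λ ≤ α/(2πσ²). Then ∫_{ℝ²} max(0, −(1/α)·(ln(2πσ²λ/α) + |x|²/(2σ²))) dx = (πσ²/α)·(ln(2πσ²λ/α))². -/
/-!
In polar coordinates the integrand is `(1/α) · (a - b r²)₊` with `b = 1/(2σ²)` and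
`a = -ln(2πσ²λ/α)`, which is `≥ 0` exactly because `λ ≤ α/(2πσ²)`. It vanishes for
`r ≥ √(a/b)`, so the integral is `2π/α · ∫₀^√(a/b) r (a - b r²) dr = π a² / (2 α b)`.
-/

open MeasureTheory Real Set

theorem integral_fun_norm_euclideanSpace_two (f : ℝ → ℝ) :
    ∫ x : EuclideanSpace ℝ (Fin 2), f ‖x‖ = 2 * π * ∫ r in Ioi 0, r * f r := by
  rw [integral_fun_norm_addHaar, finrank_euclideanSpace_fin, measureReal_def,
    EuclideanSpace.volume_ball_fin_two]
  simp [ENNReal.toReal_ofReal pi_pos.le, mul_assoc]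

theorem integral_mul_sub_mul_sq (a b R : ℝ) :
    ∫ r in (0)..R, r * (a - b * r ^ 2) = a * R ^ 2 / 2 - b * R ^ 4 / 4 := by
  have hderiv : ∀ r ∈ uIcc 0 R,
      HasDerivAt (fun r => a * r ^ 2 / 2 - b * r ^ 4 / 4) (r * (a - b * r ^ 2)) r := by
    intro r _
    refine ((((hasDerivAt_pow 2 r).const_mul a).div_const 2).sub
      (((hasDerivAt_pow 4 r).const_mul b).div_const 4)).congr_deriv ?_
    push_cast
    ring
  rw [intervalIntegral.integral_eq_sub_of_hasDerivAt hderiv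
    (Continuous.intervalIntegrable (by fun_prop) _ _)]
  ring

theorem integral_Ioi_mul_max_zero_sub_mul_sq {a b : ℝ} (ha : 0 ≤ a) (hb : 0 < b) :
    ∫ r in Ioi 0, r * max 0 (a - b * r ^ 2) = a ^ 2 / (4 * b) := by
  set R := √(a / b)
  have hR : 0 ≤ R := sqrt_nonneg _
  have hRsq : b * R ^ 2 = a := by rw [sq_sqrt (by positivity)]; field_simp
  have hvanish : ∀ r ∈ Ioi 0 \ Ioc 0 R, r * max 0 (a - b * r ^ 2) = 0 := by
    rintro r ⟨hr0, hrR⟩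
    have hRr : R < r := by simp_all
    have : a ≤ b * r ^ 2 := by rw [← hRsq]; gcongr
    simp [this]
  have hpos : ∀ r ∈ Ioc 0 R, r * max 0 (a - b * r ^ 2) = r * (a - b * r ^ 2) := by
    rintro r ⟨hr0, hrR⟩
    have : b * r ^ 2 ≤ a := by rw [← hRsq]; gcongr
    rw [max_eq_right (by linarith)]
  rw [setIntegral_eq_of_subset_of_forall_sdiff_eq_zero measurableSet_Ioi Ioc_subset_Ioi_self
    hvanish, setIntegral_congr_fun measurableSet_Ioc hpos,
    ← intervalIntegral.integral_of_le hR, integral_mul_sub_mul_sq]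
  have hR4 : R ^ 4 = (R ^ 2) ^ 2 := by ring
  rw [hR4, ← hRsq]
  field_simp
  ring

theorem integral_max_zero_sub_mul_norm_sq {a b : ℝ} (ha : 0 ≤ a) (hb : 0 < b) :
    ∫ x : EuclideanSpace ℝ (Fin 2), max 0 (a - b * ‖x‖ ^ 2) = π * a ^ 2 / (2 * b) := by
  rw [integral_fun_norm_euclideanSpace_two (fun r => max 0 (a - b * r ^ 2)),
    integral_Ioi_mul_max_zero_sub_mul_sq ha hb]
  field_simp
  ring

/-- (Example 2, computation of `Q(λ)`.) For the circular normal target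
density with parameter `σ` on `ℝ²` and homogeneous exponential detection with rate `α`,
for `0 < λ ≤ α/(2πσ²)`,
`∫_{ℝ²} max(0, −(1/α)(ln(2πσ²λ/α) + |x|²/(2σ²))) dx = (πσ²/α)·(ln(2πσ²λ/α))²`. -/
theorem circular_normal_Q
    (σ α lam : ℝ) (hσ : 0 < σ) (hα : 0 < α)
    (hlam0 : 0 < lam) (hlam : lam ≤ α / (2 * Real.pi * σ ^ 2)) :
    ∫ x : EuclideanSpace ℝ (Fin 2),
        max 0 (-(1 / α) *
          (Real.log (2 * Real.pi * σ ^ 2 * lam / α) + ‖x‖ ^ 2 / (2 * σ ^ 2))) =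
      Real.pi * σ ^ 2 / α * (Real.log (2 * Real.pi * σ ^ 2 * lam / α)) ^ 2 := by
  set c := Real.log (2 * Real.pi * σ ^ 2 * lam / α)
  have hc : c ≤ 0 := by
    refine Real.log_nonpos (by positivity) ?_
    rw [le_div_iff₀ (by positivity)] at hlam
    rw [div_le_one hα]
    linarith
  have hintegrand : ∀ x : EuclideanSpace ℝ (Fin 2),
      max 0 (-(1 / α) * (c + ‖x‖ ^ 2 / (2 * σ ^ 2))) =
        1 / α * max 0 (-c - 1 / (2 * σ ^ 2) * ‖x‖ ^ 2) := by
    intro x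
    rw [mul_max_of_nonneg _ _ (by positivity)]
    congr 1 <;> ring
  simp_rw [hintegrand]
  rw [integral_const_mul, integral_max_zero_sub_mul_norm_sq (by linarith) (by positivity)]
  field_simp
end

section
/- Let σ, α, W, v, t > 0 and set H = √(αWv/(πσ²)). Then ∫_{ℝ²} (1/(2πσ²))·e^{−|x|²/(2σ²)}·(1 − exp(−α·max(0, (1/α)·(H√t − |x|²/(2σ²))))) dx = 1 − (1 + H√t)·e^{−H√t}. -/
/-!
Writing `s = |x|²/(2σ²)` and `a = H√t`, the integrand is `(e^{-s} - e^{-max(a, s)})/(2πσ²)`,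
which vanishes for `s ≥ a`. Polar coordinates followed by the substitution `s = r²/(2σ²)` turn
the integral into `∫₀^a (e^{-s} - e^{-a}) ds = 1 - (1 + a)e^{-a}`.
-/

open MeasureTheory Set Real

section ChangeOfVariables

variable {E : Type*} [NormedAddCommGroup E] [NormedSpace ℝ E]

theorem integral_fun_norm_euclideanSpace_fin_two (f : ℝ → E) :
    ∫ x : EuclideanSpace ℝ (Fin 2), f ‖x‖ = (2 * π) • ∫ r in Ioi 0, r • f r := by
  rw [integral_fun_norm_addHaar, measureReal_def, EuclideanSpace.volume_ball_fin_two]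
  simp [ENNReal.toReal_ofReal pi_pos.le, mul_smul, ← Nat.cast_smul_eq_nsmul ℝ]

theorem integral_smul_comp_sq_div_Ioi (g : ℝ → E) {c : ℝ} (hc : 0 < c) :
    ∫ r in Ioi 0, r • g (r ^ 2 / c) = (c / 2) • ∫ u in Ioi 0, g u := by
  have hsq := integral_comp_rpow_Ioi_of_pos (g := fun u => g (u / c)) two_pos
  norm_num at hsq
  calc ∫ r in Ioi 0, r • g (r ^ 2 / c)
      = (2 : ℝ)⁻¹ • ∫ r in Ioi 0, (2 * r) • g (r ^ 2 / c) := by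
        simp [mul_smul, integral_smul]
    _ = (c / 2) • ∫ u in Ioi 0, g u := by
        simp_rw [hsq, div_eq_mul_inv]
        rw [integral_comp_mul_right_Ioi g 0 (inv_pos.2 hc), zero_mul, inv_inv, smul_smul,
          mul_comm]

end ChangeOfVariables

theorem exp_neg_mul_one_sub_exp_neg_max_zero_sub (a s : ℝ) :
    exp (-s) * (1 - exp (-max 0 (a - s))) = exp (-s) - exp (-max a s) := by
  rw [mul_sub, mul_one, ← exp_add, ← sub_self s, max_sub_sub_right, max_comm]
  ring_nf

theorem integral_exp_neg_sub_exp_neg_max_Ioi {a : ℝ} (ha : 0 ≤ a) :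
    ∫ u in Ioi 0, (exp (-u) - exp (-max a u)) = 1 - (1 + a) * exp (-a) := by
  have hvanish : EqOn (fun u => exp (-u) - exp (-max a u))
      ((Iic a).indicator fun u => exp (-u) - exp (-a)) (Ioi 0) := by
    intro u _
    by_cases hu : u ≤ a
    · simp [hu]
    · simp [hu, max_eq_right (not_le.1 hu).le]
  rw [setIntegral_congr_fun measurableSet_Ioi hvanish, setIntegral_indicator measurableSet_Iic,
    Ioi_inter_Iic, ← intervalIntegral.integral_of_le ha, intervalIntegral.integral_sub,
    intervalIntegral.integral_comp_neg (fun u => exp u), integral_exp]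
  · simp only [neg_zero, exp_zero, intervalIntegral.integral_const, sub_zero, smul_eq_mul]
    ring
  · exact (by fun_prop : Continuous fun u => exp (-u)).intervalIntegrable _ _
  · exact intervalIntegrable_const

theorem circular_normal_detection_probability_general
    (σ α W v t H : ℝ) (hσ : 0 < σ) (hα : 0 < α)
    (hH : H = Real.sqrt (α * W * v / (Real.pi * σ ^ 2))) :
    ∫ x : EuclideanSpace ℝ (Fin 2),
        1 / (2 * Real.pi * σ ^ 2) * Real.exp (-(‖x‖ ^ 2) / (2 * σ ^ 2)) *
          (1 - Real.exp (-(α * max 0 (1 / α * (H * Real.sqrt t - ‖x‖ ^ 2 / (2 * σ ^ 2)))))) =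
      1 - (1 + H * Real.sqrt t) * Real.exp (-(H * Real.sqrt t)) := by
  have ha : 0 ≤ H * √t := by rw [hH]; positivity
  set a := H * √t
  have hc : 0 < 2 * σ ^ 2 := by positivity
  have hrate (y : ℝ) : α * max 0 (1 / α * y) = max 0 y := by
    rw [mul_max_of_nonneg _ _ hα.le, mul_zero, one_div, mul_inv_cancel_left₀ hα.ne']
  set g : ℝ → ℝ := fun s => exp (-s) - exp (-max a s)
  calc _ = ∫ x : EuclideanSpace ℝ (Fin 2), 1 / (2 * π * σ ^ 2) * g (‖x‖ ^ 2 / (2 * σ ^ 2)) := by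
        simp_rw [hrate, mul_assoc, neg_div, exp_neg_mul_one_sub_exp_neg_max_zero_sub, g]
    _ = 1 / (2 * π * σ ^ 2) * (2 * π * (2 * σ ^ 2 / 2 * ∫ u in Ioi 0, g u)) := by
        rw [integral_const_mul, integral_fun_norm_euclideanSpace_fin_two
          (fun r => g (r ^ 2 / (2 * σ ^ 2))), smul_eq_mul,
          integral_smul_comp_sq_div_Ioi g hc, smul_eq_mul]
    _ = 1 - (1 + a) * exp (-a) := by
        rw [integral_exp_neg_sub_exp_neg_max_Ioi ha]
        field_simp

/-- (Example 2, subjective detection probability.) For the circular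
normal target density with parameter `σ` on `ℝ²`, the homogeneous exponential detection
function with rate `α`, and the uniformly optimal allocation
`φ*(x,t) = max(0, (1/α)(H√t − |x|²/(2σ²)))` with `H = √(αWv/(πσ²))`, the subjective
detection probability at time `t` equals `1 − (1 + H√t)·e^{−H√t}`. -/
theorem circular_normal_detection_probability
    (σ α W v t H : ℝ) (hσ : 0 < σ) (hα : 0 < α) (hW : 0 < W) (hv : 0 < v) (ht : 0 < t)
    (hH : H = Real.sqrt (α * W * v / (Real.pi * σ ^ 2))) :
    ∫ x : EuclideanSpace ℝ (Fin 2),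
        1 / (2 * Real.pi * σ ^ 2) * Real.exp (-(‖x‖ ^ 2) / (2 * σ ^ 2)) *
          (1 - Real.exp (-(α * max 0 (1 / α * (H * Real.sqrt t - ‖x‖ ^ 2 / (2 * σ ^ 2)))))) =
      1 - (1 + H * Real.sqrt t) * Real.exp (-(H * Real.sqrt t)) :=
  circular_normal_detection_probability_general σ α W v t H hσ hα hH
end

section
/- Let σ, α, W, v, t > 0, set H = √(αWv/(πσ²)), and define f(x) = max(0, (1/α)·(H√t − |x|²/(2σ²))) for x ∈ ℝ². Then for every measurable g : ℝ² → [0,∞) with ∫_{ℝ²} g(x) dx = Wvt, one has ∫_{ℝ²} (1/(2πσ²))·e^{−|x|²/(2σ²)}·(1 − e^{−α g(x)}) dx ≤ ∫_{ℝ²} (1/(2πσ²))·e^{−|x|²/(2σ²)}·(1 − e^{−α f(x)}) dx. -/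
/-!
The detection probability `g ↦ ∫ p (1 - e^{-α g})` is concave in the allocation, so it lies
below its tangent at the plan `f`: `p (1 - e^{-α g}) ≤ p (1 - e^{-α f}) + p α e^{-α f} (g - f)`.
For the circular normal density `p`, the marginal return `p α e^{-α f}` of the plan is the
constant `λ = α e^{-H√t} / (2πσ²)` where `f > 0` and at most `λ` where `f = 0` (the Kuhn–Tucker
conditions), so integrating gives `∫ p (1 - e^{-α g}) ≤ ∫ p (1 - e^{-α f}) + λ (∫ g - ∫ f)`.
Finally the plan spends exactly the budget: its superlevel sets are discs, and the layer-cake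
formula gives `∫ f = π σ² H² t / α = W v t`.
-/

open MeasureTheory Real Metric Set

theorem one_sub_exp_neg_le_add_mul (a b : ℝ) :
    1 - exp (-b) ≤ 1 - exp (-a) + exp (-a) * (b - a) := by
  have h : exp (-a) * (a - b + 1) ≤ exp (-a) * exp (a - b) :=
    mul_le_mul_of_nonneg_left (add_one_le_exp _) (exp_pos _).le
  rw [← exp_add, show -a + (a - b) = -b by ring] at h
  linarith

theorem mul_one_sub_exp_neg_le_of_kkt {p α lam y z : ℝ} (hp : 0 ≤ p) (hy : 0 ≤ y)
    (hz : 0 ≤ z) (hle : p * α * exp (-(α * y)) ≤ lam) (heq : 0 < y → p * α * exp (-(α * y)) = lam) :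
    p * (1 - exp (-(α * z))) ≤ p * (1 - exp (-(α * y))) + lam * (z - y) := by
  have htangent := mul_le_mul_of_nonneg_left (one_sub_exp_neg_le_add_mul (α * y) (α * z)) hp
  have hmult : p * α * exp (-(α * y)) * (z - y) ≤ lam * (z - y) := by
    rcases hy.eq_or_lt with rfl | hy
    · exact mul_le_mul_of_nonneg_right hle (by simpa using hz)
    · rw [heq hy]
  linarith

section Lagrangian

variable {X : Type*} [MeasurableSpace X] {μ : Measure X}

theorem MeasureTheory.Integrable.mul_one_sub_exp_neg_mul {p h : X → ℝ} {α : ℝ}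
    (hp : Integrable p μ) (hh : AEStronglyMeasurable h μ) (hα : 0 ≤ α)
    (hh0 : ∀ x, 0 ≤ h x) :
    Integrable (fun x => p x * (1 - exp (-(α * h x)))) μ := by
  refine hp.mul_bdd (c := 1)
    ((by fun_prop : Continuous fun y : ℝ => 1 - exp (-(α * y))).comp_aestronglyMeasurable hh)
    (ae_of_all _ fun x => ?_)
  have h1 : exp (-(α * h x)) ≤ 1 := exp_le_one_iff.2 (neg_nonpos.2 (mul_nonneg hα (hh0 x)))
  rw [norm_eq_abs, abs_le]
  constructor <;> linarith [exp_pos (-(α * h x))]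

theorem integral_mul_one_sub_exp_neg_le_of_kkt {p f g : X → ℝ} {α lam : ℝ} (hα : 0 ≤ α)
    (hp : Integrable p μ) (hp0 : ∀ x, 0 ≤ p x)
    (hf : Integrable f μ) (hf0 : ∀ x, 0 ≤ f x) (hg : Integrable g μ) (hg0 : ∀ x, 0 ≤ g x)
    (hfg : ∫ x, g x ∂μ = ∫ x, f x ∂μ)
    (hle : ∀ x, p x * α * exp (-(α * f x)) ≤ lam)
    (heq : ∀ x, 0 < f x → p x * α * exp (-(α * f x)) = lam) :
    ∫ x, p x * (1 - exp (-(α * g x))) ∂μ ≤ ∫ x, p x * (1 - exp (-(α * f x))) ∂μ := by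
  have hpf := hp.mul_one_sub_exp_neg_mul hf.aestronglyMeasurable hα hf0
  have hpg := hp.mul_one_sub_exp_neg_mul hg.aestronglyMeasurable hα hg0
  have hlag : Integrable (fun x => lam * (g x - f x)) μ := (hg.sub hf).const_mul lam
  calc ∫ x, p x * (1 - exp (-(α * g x))) ∂μ
      ≤ ∫ x, (p x * (1 - exp (-(α * f x))) + lam * (g x - f x)) ∂μ :=
        integral_mono hpg (hpf.add hlag) fun x =>
          mul_one_sub_exp_neg_le_of_kkt (hp0 x) (hf0 x) (hg0 x) (hle x) (heq x)
    _ = ∫ x, p x * (1 - exp (-(α * f x))) ∂μ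
          + lam * (∫ x, g x ∂μ - ∫ x, f x ∂μ) := by
        rw [integral_add hpf hlag, integral_const_mul, integral_sub hg hf]
    _ = ∫ x, p x * (1 - exp (-(α * f x))) ∂μ := by
        rw [hfg, sub_self, mul_zero, add_zero]

end Lagrangian

theorem integrable_exp_neg_sq_norm_div {V : Type*} [NormedAddCommGroup V]
    [InnerProductSpace ℝ V] [FiniteDimensional ℝ V] [MeasurableSpace V] [BorelSpace V]
    {b : ℝ} (hb : 0 < b) : Integrable (fun v : V => exp (-(‖v‖ ^ 2) / b)) := by
  refine (GaussianFourier.integrable_cexp_neg_mul_sq_norm_add (V := V) (b := b⁻¹)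
    (by simpa using hb) 0 0).norm.congr (ae_of_all _ fun v => ?_)
  simp only [Complex.norm_exp, zero_mul, add_zero, ← Complex.ofReal_pow, ← Complex.ofReal_inv,
    ← Complex.ofReal_neg, ← Complex.ofReal_mul, Complex.ofReal_re]
  congr 1
  ring

theorem mul_max_zero_one_div_mul {α : ℝ} (hα : 0 < α) (y : ℝ) :
    α * max 0 (1 / α * y) = max 0 y := by
  rw [mul_max_of_nonneg _ _ hα.le, mul_zero, ← mul_assoc, mul_one_div_cancel hα.ne', one_mul]

theorem exp_neg_mul_exp_neg_mul_max_zero_one_div_mul {α : ℝ} (hα : 0 < α) (q s : ℝ) :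
    exp (-q) * exp (-(α * max 0 (1 / α * (s - q)))) = exp (-max q s) := by
  rw [mul_max_zero_one_div_mul hα, ← exp_add, ← neg_add, ← max_add_add_left, add_zero,
    add_sub_cancel]

theorem max_zero_one_div_mul_sub_div {α σ : ℝ} (hα : 0 < α) (hσ : σ ≠ 0) (s r : ℝ) :
    max 0 (1 / α * (s - r / (2 * σ ^ 2))) =
      1 / (2 * σ ^ 2 * α) * max 0 (2 * σ ^ 2 * s - r) := by
  rw [mul_max_of_nonneg _ _ (by positivity), mul_zero]
  congr 1
  field_simp

theorem integral_Ioi_max_sub_zero {c : ℝ} (hc : 0 ≤ c) :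
    ∫ u in Ioi 0, max (c - u) 0 = c ^ 2 / 2 := by
  have hvanish : ∀ u ∈ Ioi 0 \ Ioc 0 c, max (c - u) 0 = 0 := fun u hu =>
    max_eq_right (sub_nonpos.2 (not_le.1 fun h => hu.2 ⟨hu.1, h⟩).le)
  rw [setIntegral_eq_of_subset_of_forall_sdiff_eq_zero measurableSet_Ioi Ioc_subset_Ioi_self
      hvanish,
    setIntegral_congr_fun measurableSet_Ioc fun u hu => max_eq_left (sub_nonneg.2 hu.2),
    ← intervalIntegral.integral_of_le hc,
    intervalIntegral.integral_sub intervalIntegrable_const intervalIntegral.intervalIntegrable_id,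
    intervalIntegral.integral_const, integral_id, smul_eq_mul]
  ring

theorem integrable_max_zero_sub_norm_sq {V : Type*} [NormedAddCommGroup V] [ProperSpace V]
    [MeasurableSpace V] [OpensMeasurableSpace V] (μ : Measure V) [IsFiniteMeasureOnCompacts μ]
    (c : ℝ) : Integrable (fun x : V => max 0 (c - ‖x‖ ^ 2)) μ := by
  have hcont : Continuous fun x : V => max 0 (c - ‖x‖ ^ 2) := by fun_prop
  refine hcont.integrable_of_hasCompactSupport
    (HasCompactSupport.intro (isCompact_closedBall 0 √c) fun x hx => max_eq_left ?_)
  rw [mem_closedBall, dist_zero_right, not_le] at hx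
  have := (sqrt_lt' ((sqrt_nonneg c).trans_lt hx)).1 hx
  linarith

theorem measureReal_lt_max_zero_sub_norm_sq {u : ℝ} (c : ℝ) (hu : 0 < u) :
    volume.real {x : EuclideanSpace ℝ (Fin 2) | u < max 0 (c - ‖x‖ ^ 2)} =
      π * max (c - u) 0 := by
  have hball :
      {x : EuclideanSpace ℝ (Fin 2) | u < max 0 (c - ‖x‖ ^ 2)} = ball 0 √(c - u) := by
    ext x
    rw [mem_ofPred_eq, mem_ball, dist_zero_right, lt_sqrt (norm_nonneg x), lt_max_iff]
    constructor
    · rintro (h | h) <;> linarith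
    · intro h; right; linarith
  rw [hball, measureReal_def, EuclideanSpace.volume_ball_fin_two, ENNReal.toReal_mul,
    ENNReal.toReal_pow, ENNReal.toReal_ofReal (sqrt_nonneg _), ENNReal.toReal_ofReal pi_pos.le,
    sq_sqrt', mul_comm]

theorem integral_max_zero_sub_norm_sq {c : ℝ} (hc : 0 ≤ c) :
    ∫ x : EuclideanSpace ℝ (Fin 2), max 0 (c - ‖x‖ ^ 2) = π * c ^ 2 / 2 := by
  rw [(integrable_max_zero_sub_norm_sq volume c).integral_eq_integral_meas_lt
      (ae_of_all _ fun _ => le_max_left _ _),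
    setIntegral_congr_fun measurableSet_Ioi fun u hu => measureReal_lt_max_zero_sub_norm_sq c hu,
    integral_const_mul, integral_Ioi_max_sub_zero hc]
  ring

/-- (Example 2, optimality.) For the circular normal target density with
parameter `σ` on `ℝ²` and the homogeneous exponential detection function with rate `α`,
the allocation `f(x) = max(0, (1/α)(H√t − |x|²/(2σ²)))` with `H = √(αWv/(πσ²))` maximizes
the subjective detection probability among all measurable nonnegative allocations of total
effort `Wvt`. -/
theorem circular_normal_plan_optimal
    (σ α W v t H : ℝ) (hσ : 0 < σ) (hα : 0 < α) (hW : 0 < W) (hv : 0 < v) (ht : 0 < t)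
    (hH : H = Real.sqrt (α * W * v / (Real.pi * σ ^ 2)))
    (f : EuclideanSpace ℝ (Fin 2) → ℝ)
    (hf : ∀ x, f x = max 0 (1 / α * (H * Real.sqrt t - ‖x‖ ^ 2 / (2 * σ ^ 2)))) :
    ∀ g : EuclideanSpace ℝ (Fin 2) → ℝ, Measurable g → (∀ x, 0 ≤ g x) →
      (∫ x, g x) = W * v * t →
      ∫ x : EuclideanSpace ℝ (Fin 2),
          1 / (2 * Real.pi * σ ^ 2) * Real.exp (-(‖x‖ ^ 2) / (2 * σ ^ 2)) *
            (1 - Real.exp (-(α * g x))) ≤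
        ∫ x : EuclideanSpace ℝ (Fin 2),
          1 / (2 * Real.pi * σ ^ 2) * Real.exp (-(‖x‖ ^ 2) / (2 * σ ^ 2)) *
            (1 - Real.exp (-(α * f x))) := by
  intro g _ hg0 hgE
  set s := H * √t
  have hs0 : 0 ≤ s := mul_nonneg (hH ▸ sqrt_nonneg _) (sqrt_nonneg _)
  have hs : s ^ 2 = α * W * v * t / (π * σ ^ 2) := by
    rw [mul_pow, hH, sq_sqrt (by positivity), sq_sqrt ht.le]; ring
  have hf_eq : f = fun x => 1 / (2 * σ ^ 2 * α) * max 0 (2 * σ ^ 2 * s - ‖x‖ ^ 2) :=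
    funext fun x => (hf x).trans (max_zero_one_div_mul_sub_div hα hσ.ne' _ _)
  have hfE : ∫ x, f x = W * v * t := by
    rw [hf_eq, integral_const_mul, integral_max_zero_sub_norm_sq (by positivity), mul_pow, hs]
    field_simp
  have hmarginal : ∀ x, 1 / (2 * π * σ ^ 2) * exp (-(‖x‖ ^ 2) / (2 * σ ^ 2)) * α *
      exp (-(α * f x)) = 1 / (2 * π * σ ^ 2) * α * exp (-max (‖x‖ ^ 2 / (2 * σ ^ 2)) s) :=
    fun x => by
      rw [hf, ← exp_neg_mul_exp_neg_mul_max_zero_one_div_mul hα, neg_div]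
      ring
  refine integral_mul_one_sub_exp_neg_le_of_kkt hα.le
    ((integrable_exp_neg_sq_norm_div (by positivity)).const_mul _) (fun x => by positivity)
    (hf_eq ▸ (integrable_max_zero_sub_norm_sq volume _).const_mul _)
    (fun x => by rw [hf]; exact le_max_left _ _)
    (Integrable.of_integral_ne_zero (by rw [hgE]; positivity)) hg0 (hgE.trans hfE.symm)
    (lam := 1 / (2 * π * σ ^ 2) * α * exp (-s)) (fun x => ?_) (fun x hx => ?_)
  · rw [hmarginal]
    gcongr
    exact le_max_right _ _
  · rw [hmarginal, max_eq_right]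
    contrapose! hx
    rw [hf, max_eq_left (mul_nonpos_of_nonneg_of_nonpos (by positivity) (by linarith))]
end
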